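/- arXiv:2407.20604 — 11 statements merged into one kernel-verified Lean document; each statement's English description precedes it below -/
import Mathlib

section
/- For every polytope P in R^n, P = (n/(n+1))P + (1/(n+1))V(P), where V(P) denotes the set of vertices of P and + denotes Minkowski sum. -/
open Set Pointwise Metric

/-- A polytope is the convex hull of finitely many points. -/
def IsPolytope {n : ℕ} (P : Set (EuclideanSpace ℝ (Fin n))) : Prop :=
  ∃ S : Finset (EuclideanSpace ℝ (Fin n)), P = convexHull ℝ (S : Set (EuclideanSpace ℝ (Fin n)))

/-!
By Carathéodory, a point x of a polytope P in an n-dimensional space is a convex combination of at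
most n + 1 affinely independent vertices, so some vertex v carries weight at least 1/(n+1).
Removing exactly 1/(n+1) of that weight and rescaling the rest gives a point p of P with
x = (n/(n+1)) p + (1/(n+1)) v. The reverse inclusion is convexity of P.
-/

section ConvexCombination

variable {𝕜 E ι : Type*} [Field 𝕜] [LinearOrder 𝕜] [IsStrictOrderedRing 𝕜]
  [AddCommGroup E] [Module 𝕜 E]

theorem sum_smul_mem_smul_convexHull_add_smul [Fintype ι] {A : Set E} {z : ι → E}
    (hz : ∀ i, z i ∈ A) {w : ι → 𝕜} (hw₀ : ∀ i, 0 ≤ w i) (hw₁ : ∑ i, w i = 1) {t : 𝕜}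
    (ht : t < 1) {j : ι} (hj : t ≤ w j) :
    ∑ i, w i • z i ∈ (1 - t) • convexHull 𝕜 A + t • A := by
  classical
  have ht' : 1 - t ≠ 0 := (sub_pos.2 ht).ne'
  set w' : ι → 𝕜 := fun i => (1 - t)⁻¹ * (w i - (Pi.single j t : ι → 𝕜) i)
  have hw'₀ : ∀ i, 0 ≤ w' i := by
    intro i
    refine mul_nonneg (inv_nonneg.2 (sub_pos.2 ht).le) (sub_nonneg.2 ?_)
    rcases eq_or_ne i j with rfl | hij
    · simpa using hj
    · simpa [Pi.single_apply, hij] using hw₀ i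
  have hw'₁ : ∑ i, w' i = 1 := by
    simp only [w', ← Finset.mul_sum, Finset.sum_sub_distrib, hw₁, Finset.sum_pi_single']
    simp [ht']
  have hy := mem_convexHull_of_exists_fintype w' z hw'₀ hw'₁ hz rfl
  refine ⟨_, smul_mem_smul_set hy, _, smul_mem_smul_set (hz j), ?_⟩
  simp only [w', Finset.smul_sum, smul_smul, mul_inv_cancel_left₀ ht', sub_smul,
    Finset.sum_sub_distrib]
  simp [Pi.single_apply, ite_smul]

theorem exists_inv_le_of_sum_eq_one_of_card_le [Fintype ι] {w : ι → 𝕜} (hw : ∑ i, w i = 1)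
    {m : ℕ} (hm : Fintype.card ι ≤ m) : ∃ j, (m : 𝕜)⁻¹ ≤ w j := by
  have hι : (Finset.univ : Finset ι).Nonempty := by
    by_contra h
    simp [Finset.not_nonempty_iff_eq_empty.1 h] at hw
  have hm₀ : (0 : 𝕜) < m := by
    exact_mod_cast hι.card_pos.trans_le hm
  have hle : ∑ _i : ι, (m : 𝕜)⁻¹ ≤ ∑ i, w i := by
    rw [hw, Finset.sum_const, nsmul_eq_mul, Finset.card_univ, ← div_eq_mul_inv,
      div_le_one hm₀]
    exact_mod_cast hm
  simpa using Finset.exists_le_of_sum_le hι hle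

end ConvexCombination

section FiniteDimensional

variable {𝕜 E : Type*} [Field 𝕜] [LinearOrder 𝕜] [IsStrictOrderedRing 𝕜]
  [AddCommGroup E] [Module 𝕜 E] [FiniteDimensional 𝕜 E]

theorem convexHull_subset_smul_convexHull_add_smul (A : Set E) :
    convexHull 𝕜 A ⊆
      ((Module.finrank 𝕜 E : 𝕜) / (Module.finrank 𝕜 E + 1)) • convexHull 𝕜 A +
        ((Module.finrank 𝕜 E : 𝕜) + 1)⁻¹ • A := by
  set n := Module.finrank 𝕜 E
  intro x hx
  rcases Nat.eq_zero_or_pos n with hn | hn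
  · have : Subsingleton E := Module.finrank_zero_iff.1 hn
    obtain ⟨a, ha⟩ := convexHull_nonempty_iff.1 ⟨x, hx⟩
    exact ⟨_, smul_mem_smul_set hx, _, smul_mem_smul_set ha, Subsingleton.elim _ _⟩
  obtain ⟨ι, _, z, w, hzA, hz, hw₀, hw₁, rfl⟩ := eq_pos_convex_span_of_mem_convexHull hx
  have hcard : Fintype.card ι ≤ n + 1 :=
    hz.card_le_finrank_succ.trans (Nat.succ_le_succ (Submodule.finrank_le _))
  obtain ⟨j, hj⟩ := exists_inv_le_of_sum_eq_one_of_card_le hw₁ hcard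
  have ht : ((n + 1 : ℕ) : 𝕜)⁻¹ < 1 :=
    inv_lt_one_of_one_lt₀ (by exact_mod_cast Nat.succ_lt_succ hn)
  have hmem := sum_smul_mem_smul_convexHull_add_smul (fun i => hzA ⟨i, rfl⟩)
    (fun i => (hw₀ i).le) hw₁ ht hj
  have hcoeff : 1 - ((n + 1 : ℕ) : 𝕜)⁻¹ = (n : 𝕜) / (n + 1) := by
    push_cast
    field_simp
    ring
  rwa [hcoeff, Nat.cast_succ] at hmem

end FiniteDimensional

theorem Set.Finite.convexHull_extremePoints_convexHull {E : Type*} [AddCommGroup E] [Module ℝ E]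
    [TopologicalSpace E] [T2Space E] [IsTopologicalAddGroup E] [ContinuousSMul ℝ E]
    [LocallyConvexSpace ℝ E] {S : Set E} (hS : S.Finite) :
    convexHull ℝ ((convexHull ℝ S).extremePoints ℝ) = convexHull ℝ S := by
  have hfin : ((convexHull ℝ S).extremePoints ℝ).Finite :=
    hS.subset extremePoints_convexHull_subset
  rw [← (hfin.isCompact_convexHull ℝ).isClosed.closure_eq]
  exact closure_convexHull_extremePoints (hS.isCompact_convexHull ℝ) (convex_convexHull ℝ S)

theorem stmt_0 {n : ℕ} (P : Set (EuclideanSpace ℝ (Fin n))) (hP : IsPolytope P) :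
    P = ((n : ℝ) / ((n : ℝ) + 1)) • P + (((n : ℝ) + 1)⁻¹) • (P.extremePoints ℝ) := by
  obtain ⟨S, rfl⟩ := hP
  refine Subset.antisymm ?_ ?_
  · have h := convexHull_subset_smul_convexHull_add_smul (𝕜 := ℝ)
      ((convexHull ℝ (S : Set (EuclideanSpace ℝ (Fin n)))).extremePoints ℝ)
    rwa [finrank_euclideanSpace_fin, S.finite_toSet.convexHull_extremePoints_convexHull] at h
  · refine (add_subset_add_left (smul_set_mono extremePoints_subset)).trans ?_
    exact convex_iff_pointwise_add_subset.1 (convex_convexHull ℝ _) (by positivity) (by positivity)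
      (by field_simp)
end

section
/- Every point x in a polytope P ⊆ R^n can be written as x = λv + (1-λ)y where v is a vertex of P, y ∈ P, and λ ≥ 1/(n+1). -/
/-!
By Carathéodory, `x` is a convex combination with positive weights of affinely independent
vertices of `P`, hence of at most `n + 1` of them; one of these weights is at least `1 / (n + 1)`,
and the remaining vertices, renormalised, give a point `y` of `P`. That the vertices of a polytope
span it follows from Krein–Milman, since the convex hull of finitely many points is closed.
-/

open Set Pointwise Metric

section ConvexCombination

variable {𝕜 E ι : Type*} [Field 𝕜] [LinearOrder 𝕜] [IsStrictOrderedRing 𝕜]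
  [AddCommGroup E] [Module 𝕜 E]

theorem Convex.exists_sum_smul_eq_sum_smul {K : Set E} (hK : Convex 𝕜 K) (hKne : K.Nonempty)
    {s : Finset ι} {w : ι → 𝕜} {z : ι → E} (hw : ∀ i ∈ s, 0 ≤ w i) (hz : ∀ i ∈ s, z i ∈ K) :
    ∃ y ∈ K, ∑ i ∈ s, w i • z i = (∑ i ∈ s, w i) • y := by
  rcases (Finset.sum_nonneg hw).eq_or_lt with hzero | hpos
  · obtain ⟨y, hy⟩ := hKne
    refine ⟨y, hy, ?_⟩
    rw [← hzero, zero_smul]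
    refine Finset.sum_eq_zero fun i hi => ?_
    rw [(Finset.sum_eq_zero_iff_of_nonneg hw).1 hzero.symm i hi, zero_smul]
  · exact ⟨s.centerMass w z, hK.centerMass_mem hw hpos hz, by
      rw [Finset.centerMass, smul_inv_smul₀ hpos.ne']⟩

theorem exists_mem_convexHull_sum_smul_eq_smul_add_smul [Fintype ι] [DecidableEq ι]
    {w : ι → 𝕜} {z : ι → E} (hw : ∀ i, 0 ≤ w i) (hw₁ : ∑ i, w i = 1) (j : ι) :
    ∃ y ∈ convexHull 𝕜 (range z), ∑ i, w i • z i = w j • z j + (1 - w j) • y := by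
  obtain ⟨y, hy, hsum⟩ := (convex_convexHull 𝕜 (range z)).exists_sum_smul_eq_sum_smul
    ⟨z j, subset_convexHull 𝕜 _ (mem_range_self j)⟩ (s := Finset.univ.erase j)
    (fun i _ => hw i) (fun i _ => subset_convexHull 𝕜 _ (mem_range_self i))
  refine ⟨y, hy, ?_⟩
  rw [← Finset.add_sum_erase _ _ (Finset.mem_univ j), hsum,
    Finset.sum_erase_eq_sub (Finset.mem_univ j), hw₁]

theorem exists_inv_card_le_of_sum_eq_one [Fintype ι] {w : ι → 𝕜} (hw₁ : ∑ i, w i = 1) :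
    ∃ j, (Fintype.card ι : 𝕜)⁻¹ ≤ w j := by
  have hne : (Finset.univ : Finset ι).Nonempty := by
    by_contra h
    simp [Finset.not_nonempty_iff_eq_empty.1 h] at hw₁
  have hcard : (0 : 𝕜) < Fintype.card ι := by
    exact_mod_cast Finset.card_pos.2 hne
  obtain ⟨j, -, hj⟩ := Finset.exists_le_of_sum_le hne (f := fun _ => (Fintype.card ι : 𝕜)⁻¹)
    (g := w) (by simp [hw₁, hcard.ne'])
  exact ⟨j, hj⟩

theorem exists_eq_smul_add_smul_of_mem_convexHull [FiniteDimensional 𝕜 E] {s : Set E} {x : E}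
    (hx : x ∈ convexHull 𝕜 s) :
    ∃ l : 𝕜, ∃ v ∈ s, ∃ y ∈ convexHull 𝕜 s,
      1 / ((Module.finrank 𝕜 E : 𝕜) + 1) ≤ l ∧ x = l • v + (1 - l) • y := by
  classical
  obtain ⟨ι, _, z, w, hzs, hz, hw, hw₁, rfl⟩ := eq_pos_convex_span_of_mem_convexHull hx
  obtain ⟨j, hj⟩ := exists_inv_card_le_of_sum_eq_one hw₁
  obtain ⟨y, hy, hsum⟩ :=
    exists_mem_convexHull_sum_smul_eq_smul_add_smul (z := z) (fun i => (hw i).le) hw₁ j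
  refine ⟨w j, z j, hzs (mem_range_self j), y, convexHull_mono hzs hy, ?_, hsum⟩
  have hcard : Fintype.card ι ≤ Module.finrank 𝕜 E + 1 :=
    hz.card_le_finrank_succ.trans (Nat.succ_le_succ (Submodule.finrank_le _))
  have hpos : (0 : 𝕜) < Fintype.card ι := by
    exact_mod_cast Fintype.card_pos_iff.2 ⟨j⟩
  calc 1 / ((Module.finrank 𝕜 E : 𝕜) + 1) ≤ (Fintype.card ι : 𝕜)⁻¹ := by
        rw [one_div]
        exact inv_anti₀ hpos (by exact_mod_cast hcard)
    _ ≤ w j := hj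

end ConvexCombination

theorem stmt_1 {n : ℕ} (P : Set (EuclideanSpace ℝ (Fin n))) (hP : IsPolytope P)
    (x : EuclideanSpace ℝ (Fin n)) (hx : x ∈ P) :
    ∃ (l : ℝ) (v y : EuclideanSpace ℝ (Fin n)),
      v ∈ P.extremePoints ℝ ∧ y ∈ P ∧ (1 : ℝ) / ((n : ℝ) + 1) ≤ l ∧
        x = l • v + (1 - l) • y := by
  obtain ⟨S, rfl⟩ := hP
  have hvertices := S.finite_toSet.convexHull_extremePoints_convexHull
  rw [← hvertices] at hx
  obtain ⟨l, v, hv, y, hy, hl, hxl⟩ := exists_eq_smul_add_smul_of_mem_convexHull hx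
  rw [finrank_euclideanSpace_fin] at hl
  exact ⟨l, v, y, hv, hvertices ▸ hy, hl, hxl⟩
end

section
/- For any polytope P ⊆ R^n with at least two distinct vertices, λ(P) ≤ 1/2, where λ(P) = sup{λ : P = (1-λ)P + λV(P)}. -/
open Set Pointwise Metric

/-- The vertex-generation parameter of a polytope. -/
noncomputable def lambdaParam {n : ℕ} (P : Set (EuclideanSpace ℝ (Fin n))) : ℝ :=
  sSup {l : ℝ | l ∈ Set.Icc (0:ℝ) 1 ∧ P = (1 - l) • P + l • (P.extremePoints ℝ)}

/-!
Let `a` be a point of `A` of maximal norm, so that `⟪a, ·⟫` attains its maximum on `A` only at `a`,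
and let `q` be an extreme point other than `a` at which `⟪a, ·⟫` is largest. If
`A = (1 - l) • A + l • ext A` with `l > 1/2`, write the midpoint of `a` and `q` as
`(1 - l) p + l u`. Evaluating `⟪a, ·⟫` forces `u = a`, and then `q` lies on the segment from `a`
to `p`, which contradicts extremality of `q ≠ a`.
-/

section Decomposition

variable {E : Type*} [AddCommGroup E] [Module ℝ E] {A : Set E}

theorem eq_of_mem_extremePoints_of_smul_add_smul_eq {a p q : E} {l : ℝ} (ha : a ∈ A)
    (hp : p ∈ A) (hq : q ∈ A.extremePoints ℝ) (hl : 1 / 2 < l) (hl1 : l ≤ 1)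
    (h : (1 - l) • p + l • a = (1 / 2 : ℝ) • a + (1 / 2 : ℝ) • q) : q = a := by
  have hq_eq : (2 * l - 1) • a + (2 - 2 * l) • p = q := by
    linear_combination (norm := module) (2 : ℝ) • h
  have hseg : q ∈ segment ℝ a p :=
    ⟨2 * l - 1, 2 - 2 * l, by linarith, by linarith, by ring, hq_eq⟩
  rcases ((mem_extremePoints_iff_forall_segment.mp hq).2 a ha p hp hseg) with hqa | rfl
  · exact hqa.symm
  · have : (l - 1 / 2) • (a - p) = 0 := by linear_combination (norm := module) h
    exact (sub_eq_zero.mp ((smul_eq_zero.mp this).resolve_left (by linarith))).symm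

theorem Convex.ne_smul_add_smul_extremePoints (hA : Convex ℝ A) {f : E →ₗ[ℝ] ℝ} {a q : E}
    (ha : a ∈ A) (hq : q ∈ A.extremePoints ℝ) (hfa : ∀ x ∈ A, f x ≤ f a)
    (hfq : ∀ u ∈ A.extremePoints ℝ, u ≠ a → f u ≤ f q) (hqa : f q < f a) {l : ℝ}
    (hl : 1 / 2 < l) (hl1 : l ≤ 1) : A ≠ (1 - l) • A + l • A.extremePoints ℝ := by
  intro hAeq
  have hmid : (1 / 2 : ℝ) • a + (1 / 2 : ℝ) • q ∈ A :=
    hA ha hq.1 (by norm_num) (by norm_num) (by norm_num)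
  rw [hAeq] at hmid
  obtain ⟨_, ⟨p, hp, rfl⟩, _, ⟨u, hu, rfl⟩, hsum⟩ := hmid
  obtain rfl : u = a := by
    by_contra hua
    have hf := congrArg f hsum
    simp only [map_add, map_smul, smul_eq_mul] at hf
    nlinarith [hfa p hp, hfq u hu hua]
  exact hqa.ne (congrArg f (eq_of_mem_extremePoints_of_smul_add_smul_eq ha hp hq hl hl1 hsum))

end Decomposition

section InnerProductSpace

variable {E : Type*} [NormedAddCommGroup E] [InnerProductSpace ℝ E]

theorem real_inner_lt_norm_sq_of_norm_le {a x : E} (hx : ‖x‖ ≤ ‖a‖) (hxa : x ≠ a) :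
    inner ℝ a x < ‖a‖ ^ 2 := by
  have hpos : 0 < ‖x - a‖ := norm_pos_iff.mpr (sub_ne_zero.mpr hxa)
  nlinarith [norm_sub_sq_real x a, real_inner_comm a x, norm_nonneg x]

theorem le_half_of_eq_smul_add_smul_extremePoints {A : Set E} (hconv : Convex ℝ A)
    (hcomp : IsCompact A) (hfin : (A.extremePoints ℝ).Finite)
    (hnt : (A.extremePoints ℝ).Nontrivial) {l : ℝ} (hl1 : l ≤ 1)
    (hA : A = (1 - l) • A + l • A.extremePoints ℝ) : l ≤ 1 / 2 := by
  obtain ⟨a, haA, ha⟩ := hcomp.exists_isMaxOn (hnt.nonempty.mono extremePoints_subset)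
    continuous_norm.continuousOn
  let f := innerₗ E a
  have hfa : ∀ x ∈ A, x ≠ a → f x < f a := fun x hx hxa => by
    simpa [f, real_inner_self_eq_norm_sq] using real_inner_lt_norm_sq_of_norm_le (ha hx) hxa
  obtain ⟨q, ⟨hq, hqa⟩, hmax⟩ := (A.extremePoints ℝ \ {a}).exists_max_image f hfin.sdiff
    (hnt.exists_ne a)
  by_contra! hl
  refine hconv.ne_smul_add_smul_extremePoints haA hq (fun x hx => ?_)
    (fun u hu hua => hmax u ⟨hu, hua⟩) (hfa q hq.1 hqa) hl hl1 hA
  rcases eq_or_ne x a with rfl | hxa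
  · exact le_rfl
  · exact (hfa x hx hxa).le

end InnerProductSpace

theorem stmt_2 {n : ℕ} (P : Set (EuclideanSpace ℝ (Fin n))) (hP : IsPolytope P)
    (h2 : ∃ v w, v ∈ P.extremePoints ℝ ∧ w ∈ P.extremePoints ℝ ∧ v ≠ w) :
    lambdaParam P ≤ 1 / 2 := by
  obtain ⟨S, rfl⟩ := hP
  obtain ⟨v, w, hv, hw, hvw⟩ := h2
  refine Real.sSup_le (fun l ⟨⟨_, hl1⟩, hl⟩ => ?_) (by norm_num)
  exact le_half_of_eq_smul_add_smul_extremePoints (convex_convexHull ℝ _)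
    (S.finite_toSet.isCompact_convexHull ℝ)
    (S.finite_toSet.subset extremePoints_convexHull_subset)
    ⟨v, hv, w, hw, hvw⟩ hl1 hl
end

section
/- Let P ⊆ R^n be a polytope, F a face of P, and λ ∈ (0,1). If F ⊆ (1-λ)P + λV(P), then F = (1-λ)F + λV(F). In particular, every face of a λ-vertex-generated polytope is λ-vertex-generated. -/
open Set Pointwise Metric

theorem stmt_4 {n : ℕ} (P F : Set (EuclideanSpace ℝ (Fin n))) (hP : IsPolytope P)
    (hF : IsExposed ℝ P F) (l : ℝ) (hl : l ∈ Set.Ioo (0:ℝ) 1)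
    (h : F ⊆ (1 - l) • P + l • (P.extremePoints ℝ)) :
    F = (1 - l) • F + l • (F.extremePoints ℝ) := by
  obtain ⟨hl0, hl1⟩ := hl
  have hPconv : Convex ℝ P := by
    obtain ⟨S, rfl⟩ := hP
    exact convex_convexHull ℝ _
  have hFconv : Convex ℝ F := hF.convex hPconv
  have hFsub : F ⊆ P := hF.subset
  apply Subset.antisymm
  · intro x hx
    obtain ⟨f, hFeq⟩ := hF ⟨x, hx⟩
    obtain ⟨a, ⟨p, hp, rfl⟩, b, ⟨v, hv, rfl⟩, rfl⟩ := h hx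
    have hvP : v ∈ P := hv.1
    have hxmax : ∀ y ∈ P, f y ≤ f ((1 - l) • p + l • v) := by
      have := hFeq ▸ hx
      exact this.2
    have hfx : f ((1 - l) • p + l • v) = (1 - l) * f p + l * f v := by
      simp [map_add, map_smul, smul_eq_mul]
    have hfp : f p = f ((1 - l) • p + l • v) := by
      have h1 := hxmax p hp
      have h2 := hxmax v hvP
      nlinarith
    have hfv : f v = f ((1 - l) • p + l • v) := by
      have h1 := hxmax p hp
      have h2 := hxmax v hvP
      nlinarith
    have hpF : p ∈ F := by
      rw [hFeq]
      exact ⟨hp, fun y hy => hfp ▸ hxmax y hy⟩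
    have hvF : v ∈ F := by
      rw [hFeq]
      exact ⟨hvP, fun y hy => hfv ▸ hxmax y hy⟩
    have hvext : v ∈ F.extremePoints ℝ :=
      ⟨hvF, fun x₁ h₁ x₂ h₂ hseg => hv.2 (hFsub h₁) (hFsub h₂) hseg⟩
    exact ⟨(1 - l) • p, ⟨p, hpF, rfl⟩, l • v, ⟨v, hvext, rfl⟩, rfl⟩
  · rintro x ⟨a, ⟨p, hp, rfl⟩, b, ⟨v, hv, rfl⟩, rfl⟩
    exact hFconv hp hv.1 (by linarith) hl0.le (by ring)
end

section
/- Let P ⊆ R^n be a polytope, F a face of P, θ a unit vector such that P ∩ (εθ + F) = ∅ for all ε > 0. Then for any c > 0, F + cθ is a face of P + [-cθ, cθ]. -/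
open Set Pointwise Metric

section Cone
variable {n : ℕ}
local notation "E" => EuclideanSpace ℝ (Fin n)

/-- The cone of nonnegative combinations of a finite set of points. -/
def coneOf (T : Finset E) : Set E :=
  {x | ∃ w : E → ℝ, (∀ t ∈ T, 0 ≤ w t) ∧ ∑ t ∈ T, w t • t = x}

lemma zero_mem_coneOf (T : Finset E) : (0 : E) ∈ coneOf T :=
  ⟨fun _ => 0, fun _ _ => le_rfl, by simp⟩

lemma smul_mem_coneOf {T : Finset E} {t : E} (ht : t ∈ T) {k : ℝ} (hk : 0 ≤ k) :
    k • t ∈ coneOf T := by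
  classical
  refine ⟨fun e => if e = t then k else 0, fun e _ => by dsimp only; split <;> simp [hk], ?_⟩
  have : ∀ e ∈ T, (if e = t then k else 0) • e = if e = t then k • e else 0 := by
    intro e _; split <;> simp
  rw [Finset.sum_congr rfl this, Finset.sum_ite_eq' T t (fun e => k • e), if_pos ht]

lemma convex_coneOf (T : Finset E) : Convex ℝ (coneOf T) := by
  rintro x ⟨w₁, h₁, rfl⟩ y ⟨w₂, h₂, rfl⟩ a b ha hb hab
  refine ⟨fun e => a * w₁ e + b * w₂ e, fun t htT => add_nonneg (mul_nonneg ha (h₁ t htT)) (mul_nonneg hb (h₂ t htT)), ?_⟩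
  simp only [add_smul, mul_smul, Finset.sum_add_distrib, Finset.smul_sum]

lemma coneOf_mono {T' T : Finset E} (h : T' ⊆ T) : coneOf T' ⊆ coneOf T := by
  classical
  rintro x ⟨w, hw, rfl⟩
  refine ⟨fun e => if e ∈ T' then w e else 0, fun t _ => ?_, ?_⟩
  · dsimp only; split
    · exact hw _ ‹_›
    · exact le_refl 0
  rw [← Finset.sum_subset h (fun t _ htn => by simp [htn])]
  exact Finset.sum_congr rfl fun t ht => by simp [ht]

lemma coneOf_reduce [DecidableEq (EuclideanSpace ℝ (Fin n))] {T : Finset E} (c : E → ℝ) (hc : ∑ t ∈ T, c t • t = 0)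
    {t₀ : E} (ht₀ : t₀ ∈ T) (hct₀ : 0 < c t₀) {x : E} (hx : x ∈ coneOf T) :
    ∃ t ∈ T, 0 < c t ∧ x ∈ coneOf (T.erase t) := by
  classical
  obtain ⟨w, hw, rfl⟩ := hx
  obtain ⟨t₁, ht₁, hmin⟩ := (T.filter (fun t => 0 < c t)).exists_min_image
    (fun t => w t / c t) ⟨t₀, Finset.mem_filter.mpr ⟨ht₀, hct₀⟩⟩
  obtain ⟨ht₁T, hct₁⟩ := Finset.mem_filter.mp ht₁
  set r : ℝ := w t₁ / c t₁ with hr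
  have hr0 : 0 ≤ r := div_nonneg (hw _ ht₁T) hct₁.le
  have hw' : ∀ t ∈ T, 0 ≤ w t - r * c t := by
    intro t ht
    by_cases hpos : 0 < c t
    · have hm := hmin t (Finset.mem_filter.mpr ⟨ht, hpos⟩)
      have h2 : w t₁ * c t ≤ w t * c t₁ := (div_le_div_iff₀ hct₁ hpos).mp hm
      have h3 : r * c t ≤ w t := by
        rw [hr, div_mul_eq_mul_div, div_le_iff₀ hct₁]; linarith
      linarith
    · push_neg at hpos
      nlinarith [hw t ht, mul_nonpos_of_nonneg_of_nonpos hr0 hpos]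
  refine ⟨t₁, ht₁T, hct₁, ⟨fun e => w e - r * c e, fun t ht => hw' t (Finset.mem_of_mem_erase ht), ?_⟩⟩
  have hsplit : ∑ t ∈ T, (w t - r * c t) • t = ∑ t ∈ T, w t • t := by
    simp only [sub_smul, Finset.sum_sub_distrib, mul_smul, ← Finset.smul_sum, hc, smul_zero,
      sub_zero]
  have hzero : (w t₁ - r * c t₁) • t₁ = 0 := by
    rw [hr, div_mul_cancel₀ _ hct₁.ne', sub_self, zero_smul]
  calc ∑ t ∈ T.erase t₁, (w t - r * c t) • t
      = (w t₁ - r * c t₁) • t₁ + ∑ t ∈ T.erase t₁, (w t - r * c t) • t := by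
        rw [hzero, zero_add]
    _ = ∑ t ∈ T, (w t - r * c t) • t := Finset.add_sum_erase T (fun t => (w t - r * c t) • t) ht₁T
    _ = ∑ t ∈ T, w t • t := hsplit

lemma isClosed_coneOf (T : Finset E) : IsClosed (coneOf T) := by
  classical
  induction T using Finset.strongInduction with
  | _ T ih =>
  by_cases hind : LinearIndependent ℝ (fun t : {x // x ∈ T} => (t : E))
  · let φ : ({x // x ∈ T} → ℝ) →ₗ[ℝ] E :=
      { toFun := fun w => ∑ t ∈ T.attach, w t • (t : E)
        map_add' := by intro a b; simp [add_smul, Finset.sum_add_distrib]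
        map_smul' := by intro r a; simp [mul_smul, Finset.smul_sum] }
    have hker : LinearMap.ker φ = ⊥ := by
      rw [LinearMap.ker_eq_bot']
      intro w hw
      have h0 : ∑ t : {x // x ∈ T}, w t • (t : E) = 0 := by
        rw [Finset.univ_eq_attach]; exact hw
      funext t
      exact Fintype.linearIndependent_iff.mp hind w h0 t
    have hemb := LinearMap.isClosedEmbedding_of_injective hker
    have horth : IsClosed {w : {x // x ∈ T} → ℝ | ∀ t, 0 ≤ w t} := by
      have : {w : {x // x ∈ T} → ℝ | ∀ t, 0 ≤ w t} = ⋂ t, {w | 0 ≤ w t} := by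
        ext w; simp [Set.mem_iInter]
      rw [this]
      exact isClosed_iInter fun t => isClosed_le continuous_const (continuous_apply t)
    have himg : coneOf T = φ '' {w | ∀ t, 0 ≤ w t} := by
      ext x
      constructor
      · rintro ⟨w, hw, rfl⟩
        refine ⟨fun t => w t, fun t => hw t t.2, ?_⟩
        show ∑ t ∈ T.attach, w (t : E) • (t : E) = _
        rw [Finset.sum_attach T (fun e => w e • e)]
      · rintro ⟨w, hw, rfl⟩
        refine ⟨fun e => if h : e ∈ T then w ⟨e, h⟩ else 0, fun t ht => ?_, ?_⟩
        · simp only [dif_pos ht]; exact hw ⟨t, ht⟩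
        · show _ = ∑ t ∈ T.attach, w t • (t : E)
          rw [← Finset.sum_attach T (fun e => (if h : e ∈ T then w ⟨e, h⟩ else 0) • e)]
          exact Finset.sum_congr rfl fun t _ => by rw [dif_pos t.2]
    rw [himg]
    exact hemb.isClosedMap _ horth
  · obtain ⟨g, hg, i, hgi⟩ := Fintype.not_linearIndependent_iff.mp hind
    have main : ∀ c : E → ℝ, (∑ t ∈ T, c t • t = 0) → ∀ t₀ ∈ T, 0 < c t₀ →
        IsClosed (coneOf T) := by
      intro c hc t₀ ht₀ hct₀
      have hun : coneOf T = ⋃ t ∈ (↑(T.filter fun t => 0 < c t) : Set E), coneOf (T.erase t) := by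
        apply Set.Subset.antisymm
        · intro x hx
          obtain ⟨t, htT, hct, hxt⟩ := coneOf_reduce c hc ht₀ hct₀ hx
          exact Set.mem_iUnion₂.mpr ⟨t, Finset.mem_coe.mpr (Finset.mem_filter.mpr ⟨htT, hct⟩), hxt⟩
        · exact Set.iUnion₂_subset fun t _ => coneOf_mono (Finset.erase_subset _ _)
      rw [hun]
      refine Set.Finite.isClosed_biUnion (Finset.finite_toSet _) fun t ht => ?_
      exact ih _ (Finset.erase_ssubset (Finset.mem_filter.mp (Finset.mem_coe.mp ht)).1)
    set c : E → ℝ := fun e => if h : e ∈ T then g ⟨e, h⟩ else 0 with hcdef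
    have hcsum : ∑ t ∈ T, c t • t = 0 := by
      rw [← Finset.sum_attach T (fun e => c e • e), ← hg, Finset.univ_eq_attach]
      exact Finset.sum_congr rfl fun t _ => by simp [hcdef, t.2]
    have hci : c (i : E) = g i := by simp [hcdef, i.2]
    have hcine : c (i : E) ≠ 0 := by rw [hci]; exact hgi
    by_cases hpos : 0 < c (i : E)
    · exact main c hcsum i i.2 hpos
    · have hneg : 0 < -c (i : E) := by
        push_neg at hpos
        have : c (i : E) < 0 := lt_of_le_of_ne hpos hcine
        linarith
      refine main (fun e => -c e) ?_ i i.2 hneg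
      simp only [neg_smul, Finset.sum_neg_distrib, hcsum, neg_zero]

lemma coneOf_separation {T : Finset E} {v : E} (hv : v ∉ coneOf T) :
    ∃ m : EuclideanSpace ℝ (Fin n) →L[ℝ] ℝ, (∀ t ∈ T, m t ≤ 0) ∧ 0 < m v := by
  obtain ⟨f, u, hfu, huv⟩ :=
    geometric_hahn_banach_closed_point (convex_coneOf T) (isClosed_coneOf T) hv
  have hu0 : 0 < u := by simpa using hfu 0 (zero_mem_coneOf T)
  refine ⟨f, fun t ht => ?_, hu0.trans huv⟩
  by_contra hft
  push_neg at hft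
  have hk : (0:ℝ) ≤ (u + 1) / f t := div_nonneg (by linarith) hft.le
  have := hfu _ (smul_mem_coneOf ht hk)
  rw [map_smul, smul_eq_mul, div_mul_cancel₀ _ (ne_of_gt hft)] at this
  linarith
lemma combo_mem {P : Set E} (hP : Convex ℝ P) (S : Finset E) (μ : E → ℝ) (x₀ : E)
    (hx₀ : x₀ ∈ P) (hsP : ∀ s ∈ S, s ∈ P) (h0 : ∀ s ∈ S, 0 ≤ μ s)
    (h1 : ∑ s ∈ S, μ s ≤ 1) :
    (1 - ∑ s ∈ S, μ s) • x₀ + ∑ s ∈ S, μ s • s ∈ P := by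
  classical
  have hsum : ∑ s ∈ S, μ s • s = ∑ t : {x // x ∈ S}, μ (t : E) • (t : E) := by
    rw [Finset.univ_eq_attach, Finset.sum_attach S (fun e => μ e • e)]
  have hwsum : ∑ s ∈ S, μ s = ∑ t : {x // x ∈ S}, μ (t : E) := by
    rw [Finset.univ_eq_attach, Finset.sum_attach S (fun e => μ e)]
  have := hP.sum_mem (t := (Finset.univ : Finset (Option {x // x ∈ S})))
    (w := fun o => o.elim (1 - ∑ s ∈ S, μ s) (fun s => μ (s : E)))
    (z := fun o => o.elim x₀ (fun s => (s : E)))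
    (fun o _ => by
      cases o with
      | none => simpa using by linarith
      | some t => exact h0 _ t.2)
    (by
      rw [Fintype.sum_option]
      simp only [Option.elim]
      rw [← hwsum]; ring)
    (fun o _ => by
      cases o with
      | none => exact hx₀
      | some t => exact hsP _ t.2)
  rw [Fintype.sum_option] at this
  simpa only [Option.elim, ← hsum] using this

end Cone


set_option maxHeartbeats 1000000 in
theorem stmt_5 {n : ℕ} (P F : Set (EuclideanSpace ℝ (Fin n))) (hP : IsPolytope P)
    (hF : IsExposed ℝ P F) (θ : EuclideanSpace ℝ (Fin n)) (hθ : ‖θ‖ = 1)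
    (hsep : ∀ ε : ℝ, 0 < ε → P ∩ ((ε • θ) +ᵥ F) = ∅) (c : ℝ) (hc : 0 < c) :
    IsExposed ℝ (P + segment ℝ (-(c • θ)) (c • θ)) ((c • θ) +ᵥ F) := by
  classical
  obtain ⟨S, hS⟩ := hP
  intro hne
  obtain ⟨y0, hy0⟩ := hne
  rw [Set.mem_vadd_set] at hy0
  obtain ⟨f₀, hf₀F, -⟩ := hy0
  obtain ⟨l, hl⟩ := hF ⟨f₀, hf₀F⟩
  have hf₀P : f₀ ∈ P := by rw [hl] at hf₀F; exact hf₀F.1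
  have hmaxf₀ : ∀ y ∈ P, l y ≤ l f₀ := by rw [hl] at hf₀F; exact hf₀F.2
  have hFP : F ⊆ P := by rw [hl]; exact fun x hx => hx.1
  have hPc : Convex ℝ P := hS ▸ convex_convexHull ℝ _
  have hmemP : ∀ s ∈ S, s ∈ P := fun s hs => hS ▸ subset_convexHull ℝ _ hs
  have hmemF : ∀ {x}, x ∈ P → l x = l f₀ → x ∈ F := by
    intro x hxP hxl; rw [hl]; exact ⟨hxP, fun y hy => hxl ▸ hmaxf₀ y hy⟩
  have hFval : ∀ x ∈ F, l x = l f₀ := by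
    intro x hx; rw [hl] at hx; exact le_antisymm (hmaxf₀ x hx.1) (hx.2 f₀ hf₀P)
  set S_F := S.filter (fun s => l s = l f₀) with hSFdef
  have hSFsub : S_F ⊆ S := Finset.filter_subset _ _
  have hSne : S.Nonempty := by
    rcases S.eq_empty_or_nonempty with h | h
    · exfalso
      rw [h] at hS
      simp only [Finset.coe_empty, convexHull_empty] at hS
      rw [hS] at hf₀P; exact hf₀P
    · exact h
  obtain ⟨s₀, hs₀S, hs₀max⟩ := S.exists_max_image l hSne
  have hubP : ∀ y ∈ P, l y ≤ l s₀ := by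
    intro y hy
    rw [hS] at hy
    exact convexHull_min hs₀max (convex_halfSpace_le ⟨map_add l, map_smul l⟩ (l s₀)) hy
  have hs₀F : s₀ ∈ S_F := Finset.mem_filter.mpr
    ⟨hs₀S, le_antisymm (hmaxf₀ s₀ (hmemP s₀ hs₀S)) (hubP f₀ hf₀P)⟩
  set N := S_F.card with hNdef
  have hN : 0 < (N : ℝ) := by
    have : 0 < N := Finset.card_pos.mpr ⟨s₀, hs₀F⟩
    exact_mod_cast this
  set x₀ := (N : ℝ)⁻¹ • ∑ s ∈ S_F, s with hx₀def
  have hx₀sum : x₀ = ∑ s ∈ S_F, (N : ℝ)⁻¹ • s := by rw [hx₀def, Finset.smul_sum]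
  have hx₀P : x₀ ∈ P := by
    rw [hx₀sum]
    refine hPc.sum_mem (w := fun _ => (N : ℝ)⁻¹) (z := fun s => s)
      (fun s _ => inv_nonneg.mpr hN.le) ?_ (fun s hs => hmemP s (hSFsub hs))
    rw [Finset.sum_const, nsmul_eq_mul, ← hNdef, mul_inv_cancel₀ (ne_of_gt hN)]
  have hlin : ∀ (m : EuclideanSpace ℝ (Fin n) →L[ℝ] ℝ),
      m x₀ = ∑ s ∈ S_F, (N : ℝ)⁻¹ * m s := by
    intro m
    rw [hx₀sum, map_sum]
    exact Finset.sum_congr rfl fun s _ => by rw [map_smul, smul_eq_mul]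
  have hlx₀ : l x₀ = l f₀ := by
    have h1 : ∑ s ∈ S_F, (N : ℝ)⁻¹ * l s = ∑ s ∈ S_F, (N : ℝ)⁻¹ * l f₀ :=
      Finset.sum_congr rfl fun s hs => by rw [(Finset.mem_filter.mp hs).2]
    rw [hlin l, h1, Finset.sum_const, nsmul_eq_mul, ← hNdef, ← mul_assoc,
      mul_inv_cancel₀ (ne_of_gt hN), one_mul]
  have hx₀F : x₀ ∈ F := hmemF hx₀P hlx₀
  -- Property K
  have propK : ∀ m : EuclideanSpace ℝ (Fin n) →L[ℝ] ℝ, (∀ s ∈ S, m s ≤ m x₀) →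
      (∀ y ∈ P, m y ≤ m x₀) ∧ (∀ x ∈ F, m x = m x₀) := by
    intro m hms
    have hPm : ∀ y ∈ P, m y ≤ m x₀ := by
      intro y hy
      rw [hS] at hy
      exact convexHull_min hms (convex_halfSpace_le ⟨map_add m, map_smul m⟩ (m x₀)) hy
    refine ⟨hPm, ?_⟩
    have hsum0 : ∑ s ∈ S_F, ((N : ℝ)⁻¹ * (m x₀ - m s)) = 0 := by
      have hexp : ∑ s ∈ S_F, ((N : ℝ)⁻¹ * (m x₀ - m s))
          = (∑ s ∈ S_F, (N : ℝ)⁻¹ * m x₀) - ∑ s ∈ S_F, (N : ℝ)⁻¹ * m s := by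
        rw [← Finset.sum_sub_distrib]
        exact Finset.sum_congr rfl fun s _ => by ring
      rw [hexp, ← hlin m, Finset.sum_const, nsmul_eq_mul, ← hNdef, ← mul_assoc,
        mul_inv_cancel₀ (ne_of_gt hN), one_mul, sub_self]
    have hSFeq : ∀ s ∈ S_F, m s = m x₀ := by
      intro s hs
      have h := (Finset.sum_eq_zero_iff_of_nonneg
        (fun s' hs' => mul_nonneg (inv_nonneg.mpr hN.le)
          (by linarith [hms s' (hSFsub hs')]))).mp hsum0 s hs
      rcases mul_eq_zero.mp h with h' | h'
      · exact absurd h' (inv_pos.mpr hN).ne'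
      · linarith
    intro x hxF
    have hxP : x ∈ P := hFP hxF
    have hxl : l x = l f₀ := hFval x hxF
    have hxc : x ∈ convexHull ℝ (↑S : Set (EuclideanSpace ℝ (Fin n))) := hS ▸ hxP
    rw [Finset.convexHull_eq] at hxc
    obtain ⟨w, hw0, hw1, hwx⟩ := hxc
    rw [Finset.centerMass_eq_of_sum_1 _ _ hw1] at hwx
    simp only [id_eq] at hwx
    have happ : ∀ (m' : EuclideanSpace ℝ (Fin n) →L[ℝ] ℝ), m' x = ∑ s ∈ S, w s * m' s := by
      intro m'
      rw [← hwx, map_sum]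
      exact Finset.sum_congr rfl fun s _ => by rw [map_smul, smul_eq_mul]
    have hprod : ∀ s ∈ S, w s * (l f₀ - l s) = 0 := by
      refine (Finset.sum_eq_zero_iff_of_nonneg
        (fun s hs => mul_nonneg (hw0 s hs)
          (by linarith [hmaxf₀ s (hmemP s hs)]))).mp ?_
      have hexp : ∑ s ∈ S, w s * (l f₀ - l s)
          = (∑ s ∈ S, w s) * l f₀ - ∑ s ∈ S, w s * l s := by
        rw [Finset.sum_mul, ← Finset.sum_sub_distrib]
        exact Finset.sum_congr rfl fun s _ => by ring
      rw [hexp, hw1, ← happ l, hxl]; ring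
    have hzero : ∑ s ∈ S, w s * (m x₀ - m s) = 0 := by
      refine Finset.sum_eq_zero fun s hs => ?_
      rcases eq_or_ne (w s) 0 with h | h
      · rw [h, zero_mul]
      · have hls : l f₀ - l s = 0 := by
          rcases mul_eq_zero.mp (hprod s hs) with h' | h'
          · exact absurd h' h
          · exact h'
        have hsF : s ∈ S_F := Finset.mem_filter.mpr ⟨hs, by linarith⟩
        rw [hSFeq s hsF, sub_self, mul_zero]
    have hexp2 : ∑ s ∈ S, w s * (m x₀ - m s) = m x₀ - m x := by
      have : ∑ s ∈ S, w s * (m x₀ - m s)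
          = (∑ s ∈ S, w s) * m x₀ - ∑ s ∈ S, w s * m s := by
        rw [Finset.sum_mul, ← Finset.sum_sub_distrib]
        exact Finset.sum_congr rfl fun s _ => by ring
      rw [this, hw1, ← happ m]; ring
    rw [hexp2] at hzero
    linarith
  -- the cone separation
  set T := S.image (fun s => s - x₀) with hT
  have hθT : θ ∉ coneOf T := by
    rintro ⟨w, hw0, hwsum⟩
    rw [hT, Finset.sum_image (fun a _ b _ h => by simpa using h)] at hwsum
    set lam : EuclideanSpace ℝ (Fin n) → ℝ := fun s => w (s - x₀) with hlam
    have hlam0 : ∀ s ∈ S, 0 ≤ lam s := fun s hs =>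
      hw0 _ (by rw [hT]; exact Finset.mem_image_of_mem _ hs)
    set W := ∑ s ∈ S, lam s with hW
    have hW0 : 0 ≤ W := Finset.sum_nonneg hlam0
    set ε := (W + 1)⁻¹ with hε
    have hεpos : 0 < ε := inv_pos.mpr (by linarith)
    have hq : x₀ + ε • θ ∈ P := by
      have hsum : ∑ s ∈ S, (ε * lam s) = ε * W := by rw [hW, Finset.mul_sum]
      have h1 : ε • θ = ∑ s ∈ S, (ε * lam s) • (s - x₀) := by
        rw [← hwsum, Finset.smul_sum]
        exact Finset.sum_congr rfl fun s _ => by rw [smul_smul]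
      have key : (1 - ∑ s ∈ S, (ε * lam s)) • x₀ + ∑ s ∈ S, (ε * lam s) • s
          = x₀ + ε • θ := by
        rw [h1]
        simp only [smul_sub, Finset.sum_sub_distrib, sub_smul, one_smul, ← Finset.sum_smul]
        abel
      rw [← key]
      refine combo_mem hPc S _ x₀ hx₀P hmemP
        (fun s hs => mul_nonneg hεpos.le (hlam0 s hs)) ?_
      rw [hsum, hε, inv_mul_le_iff₀ (by linarith : (0:ℝ) < W + 1)]
      linarith
    have hmem : x₀ + ε • θ ∈ P ∩ ((ε • θ) +ᵥ F) :=
      ⟨hq, Set.mem_vadd_set.mpr ⟨x₀, hx₀F, by rw [vadd_eq_add, add_comm]⟩⟩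
    rw [hsep ε hεpos] at hmem
    exact hmem
  obtain ⟨m, hmT, hmθ⟩ := coneOf_separation hθT
  have hms : ∀ s ∈ S, m s ≤ m x₀ := by
    intro s hs
    have := hmT _ (by rw [hT]; exact Finset.mem_image_of_mem _ hs)
    rw [map_sub] at this
    linarith
  obtain ⟨hmP, hmF⟩ := propK m hms
  set δ := (|l θ| + 1) / m θ with hδ
  have hδpos : 0 < δ := div_pos (by positivity) hmθ
  set μ : EuclideanSpace ℝ (Fin n) →L[ℝ] ℝ := l + δ • m with hμ
  have hμapp : ∀ x, μ x = l x + δ * m x := fun x => by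
    rw [hμ]; simp [ContinuousLinearMap.add_apply, ContinuousLinearMap.smul_apply, smul_eq_mul]
  have hμθ : 0 < μ θ := by
    rw [hμapp, hδ, div_mul_cancel₀ _ (ne_of_gt hmθ)]
    have h1 := abs_nonneg (l θ)
    have h2 := neg_abs_le (l θ)
    linarith
  have hcμθ : 0 < c * μ θ := mul_pos hc hμθ
  have hμPF : ∀ p ∈ P, ∀ f ∈ F, μ p ≤ μ f := by
    intro p hp f hf
    rw [hμapp, hμapp]
    have h1 : l p ≤ l f := by rw [hl] at hf; exact hf.2 p hp
    have h2 := mul_le_mul_of_nonneg_left (hmP p hp) hδpos.le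
    have h3 : m f = m x₀ := hmF f hf
    have h4 : δ * m f = δ * m x₀ := by rw [h3]
    linarith
  have hseg : ∀ z ∈ segment ℝ (-(c • θ)) (c • θ),
      μ z ≤ c * μ θ ∧ (μ z = c * μ θ → z = c • θ) := by
    rintro z ⟨a, b, ha, hb, hab, rfl⟩
    have hz : μ (a • -(c • θ) + b • (c • θ)) = (b - a) * (c * μ θ) := by
      rw [map_add, map_smul, map_smul, map_neg, map_smul]
      simp only [smul_eq_mul]
      ring
    constructor
    · rw [hz]
      nlinarith
    · intro he
      rw [hz] at he
      have hba : b - a = 1 :=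
        mul_right_cancel₀ (ne_of_gt hcμθ) (by rw [he, one_mul])
      have ha0 : a = 0 := by linarith
      have hb1 : b = 1 := by linarith
      rw [ha0, hb1]
      simp
  refine ⟨μ, ?_⟩
  ext x
  constructor
  · intro hx
    rw [Set.mem_vadd_set] at hx
    obtain ⟨f, hfF, rfl⟩ := hx
    constructor
    · rw [show c • θ +ᵥ f = f + c • θ from by rw [vadd_eq_add]; exact add_comm _ _]
      exact add_mem_add (hFP hfF) (right_mem_segment ℝ _ _)
    · intro y hy
      obtain ⟨p, hp, z, hz, rfl⟩ := Set.mem_add.mp hy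
      rw [vadd_eq_add, map_add, map_add,
        show μ (c • θ) = c * μ θ from by rw [map_smul, smul_eq_mul]]
      have h1 := (hseg z hz).1
      have h2 := hμPF p hp f hfF
      linarith
  · rintro ⟨hxQ, hmax⟩
    obtain ⟨p, hp, z, hz, rfl⟩ := Set.mem_add.mp hxQ
    have hy' : x₀ + c • θ ∈ P + segment ℝ (-(c • θ)) (c • θ) :=
      add_mem_add hx₀P (right_mem_segment ℝ _ _)
    have hkey := hmax _ hy'
    rw [map_add, map_add,
      show μ (c • θ) = c * μ θ from by rw [map_smul, smul_eq_mul]] at hkey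
    have h1 : μ p ≤ μ x₀ := hμPF p hp x₀ hx₀F
    have h2 := (hseg z hz).1
    have hze : μ z = c * μ θ := by linarith
    have hpe : μ p = μ x₀ := by linarith
    have hzz : z = c • θ := (hseg z hz).2 hze
    have hplx : l p = l x₀ := by
      rw [hμapp, hμapp] at hpe
      have h3 := mul_le_mul_of_nonneg_left (hmP p hp) hδpos.le
      have h4 : l p ≤ l x₀ := (hmaxf₀ p hp).trans_eq hlx₀.symm
      linarith
    have hpF : p ∈ F := hmemF hp (hplx.trans hlx₀)
    rw [Set.mem_vadd_set]
    exact ⟨p, hpF, by rw [vadd_eq_add, add_comm, hzz]⟩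
end

section
/- Every zonotope Z ⊆ R^n satisfies Z + V(Z) = 2Z, i.e., every zonotope is vertex generated. -/
open Set Pointwise Metric

/-- A zonotope is a Minkowski sum of finitely many segments. -/
def IsZonotope {n : ℕ} (Z : Set (EuclideanSpace ℝ (Fin n))) : Prop :=
  ∃ (m : ℕ) (a b : Fin m → EuclideanSpace ℝ (Fin n)),
    Z = ∑ i, segment ℝ (a i) (b i)

/-!
Let `c` be the centre of symmetry of the zonotope `Z` and `z ∈ Z`. If `z = c`, any vertex `v`
works, since `2c - v ∈ Z`. Otherwise push `z` away from `c` to the last point `p` of the ray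
in `Z`. Then `p` lies on a proper exposed face `F` of `Z`; faces of a Minkowski sum are sums of
faces, so `F` is again a zonotope, of smaller dimension. By induction there is a vertex `v` of
`F`, hence of `Z`, with `2p - v ∈ F`, and `2z - v` is a convex combination of `2c - v` and
`2p - v`. Only compactness, convexity, central symmetry and closure under exposed faces are used.
-/

section ConvexGeometry

theorem vectorSpan_le_ker_of_forall_eq {k V M : Type*} [Ring k] [AddCommGroup V] [Module k V]
    [AddCommGroup M] [Module k M] {s : Set V} {f : V →ₗ[k] M}
    (h : ∀ x ∈ s, ∀ y ∈ s, f x = f y) : vectorSpan k s ≤ LinearMap.ker f := by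
  rw [vectorSpan_def, Submodule.span_le]
  rintro _ ⟨x, hx, y, hy, rfl⟩
  simp [h x hx y hy]

variable {E : Type*} [NormedAddCommGroup E] [NormedSpace ℝ E]

theorem IsCompact.exists_farthest_mem_ray {K : Set E} (hK : IsCompact K) {c z : E} (hz : z ∈ K)
    (hzc : z ≠ c) : ∃ t : ℝ, 1 ≤ t ∧ c + t • (z - c) ∈ K ∧
      ∀ δ : ℝ, 0 < δ → c + t • (z - c) + δ • (z - c) ∉ K := by
  have hray : Topology.IsClosedEmbedding fun t : ℝ => c + t • (z - c) :=
    (Homeomorph.addLeft c).isClosedEmbedding.comp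
      (isClosedEmbedding_smul_left (sub_ne_zero.2 hzc))
  have h1 : (1 : ℝ) ∈ (fun t : ℝ => c + t • (z - c)) ⁻¹' K := by simpa using hz
  obtain ⟨t, htK, htmax⟩ := (hray.isCompact_preimage hK).exists_isGreatest ⟨1, h1⟩
  refine ⟨t, htmax h1, htK, fun δ hδ hK' => ?_⟩
  have : t + δ ≤ t := htmax (by simpa [add_smul, add_assoc] using hK')
  linarith

theorem Convex.interior_add_submodule_nonempty [FiniteDimensional ℝ E] {K : Set E}
    (hK : Convex ℝ K) (hne : K.Nonempty) {W : Submodule ℝ E} (hW : vectorSpan ℝ K ⊔ W = ⊤) :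
    (interior (K + (W : Set E))).Nonempty := by
  obtain ⟨p, hp⟩ := hne
  have hp0 : p + 0 ∈ K + (W : Set E) := add_mem_add hp W.zero_mem
  rw [(hK.add W.convex).interior_nonempty_iff_affineSpan_eq_top,
    AffineSubspace.affineSpan_eq_top_iff_vectorSpan_eq_top_of_nonempty _ _ _ ⟨_, hp0⟩,
    eq_top_iff, ← hW]
  refine sup_le (vectorSpan_mono ℝ fun x hx => ⟨x, hx, 0, W.zero_mem, add_zero x⟩) fun w hw => ?_
  simpa using vsub_mem_vectorSpan ℝ (add_mem_add hp hw) hp0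

theorem Convex.exists_supporting_dual_of_forall_add_smul_notMem [FiniteDimensional ℝ E]
    {K : Set E} (hK : Convex ℝ K) {p u : E} (hp : p ∈ K) (hu : u ∈ vectorSpan ℝ K)
    (hmax : ∀ δ : ℝ, 0 < δ → p + δ • u ∉ K) :
    ∃ f : StrongDual ℝ E, (∀ x ∈ K, f x ≤ f p) ∧ ∃ x ∈ K, f x < f p := by
  -- Separate `p` from the thickening `K + W`, which has nonempty interior; the functional
  -- obtained vanishes on `W`, so it cannot also be constant on `K`.
  obtain ⟨W, hW⟩ := (vectorSpan ℝ K).exists_isCompl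
  have hpint : p ∉ interior (K + (W : Set E)) := by
    intro hpi
    have hev : ∀ᶠ δ in nhdsWithin (0 : ℝ) (Ioi 0), p + δ • u ∈ K + (W : Set E) := by
      refine nhdsWithin_le_nhds ?_
      have hcont : Continuous fun δ : ℝ => p + δ • u := by fun_prop
      exact ((hcont.tendsto 0).eventually (isOpen_interior.mem_nhds (by simpa using hpi))).mono
        fun δ hδ => interior_subset hδ
    obtain ⟨δ, hδKW, hδ⟩ := (hev.and self_mem_nhdsWithin).exists
    obtain ⟨k, hk, w, hw, hkw⟩ := Set.mem_add.1 hδKW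
    have hwV : w ∈ vectorSpan ℝ K := by
      have : w = (p -ᵥ k) + δ • u := by rw [vsub_eq_sub, sub_add_eq_add_sub, ← hkw]; abel
      exact this ▸ add_mem (vsub_mem_vectorSpan ℝ hp hk) (Submodule.smul_mem _ _ hu)
    have hw0 : w = 0 := Submodule.disjoint_def.1 hW.disjoint w hwV hw
    exact hmax δ hδ (by rw [← hkw, hw0, add_zero]; exact hk)
  obtain ⟨f, hf0, hfle⟩ := geometric_hahn_banach_of_nonempty_interior_point (hK.add W.convex)
    hpint (hK.interior_add_submodule_nonempty ⟨p, hp⟩ hW.sup_eq_top)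
  have hfK : ∀ x ∈ K, f x ≤ f p := fun x hx => by
    simpa using hfle (x + 0) (add_mem_add hx W.zero_mem)
  refine ⟨f, hfK, ?_⟩
  by_contra! hconst
  have hfV : vectorSpan ℝ K ≤ LinearMap.ker (f : E →ₗ[ℝ] ℝ) :=
    vectorSpan_le_ker_of_forall_eq fun x hx y hy => by
      simp [le_antisymm (hfK x hx) (hconst x hx), le_antisymm (hfK y hy) (hconst y hy)]
  have hfW : W ≤ LinearMap.ker (f : E →ₗ[ℝ] ℝ) := fun w hw => by
    have h1 := hfle (p + w) (add_mem_add hp hw)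
    have h2 := hfle (p + -w) (add_mem_add hp (W.neg_mem hw))
    simp only [map_add, map_neg] at h1 h2
    simp only [LinearMap.mem_ker, ContinuousLinearMap.coe_coe]
    linarith
  have htop : (⊤ : Submodule ℝ E) ≤ LinearMap.ker (f : E →ₗ[ℝ] ℝ) := hW.sup_eq_top ▸ sup_le hfV hfW
  exact hf0 (ContinuousLinearMap.ext fun x => htop Submodule.mem_top)

theorem vectorSpan_toExposed_lt {K : Set E} {f : StrongDual ℝ E} {x y : E} (hx : x ∈ K)
    (hy : y ∈ K) (hlt : f x < f y) : vectorSpan ℝ (f.toExposed K) < vectorSpan ℝ K := by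
  refine lt_of_le_of_ne (vectorSpan_mono ℝ fun _ h => h.1) fun heq => hlt.ne ?_
  have hker : vectorSpan ℝ (f.toExposed K) ≤ LinearMap.ker (f : E →ₗ[ℝ] ℝ) :=
    vectorSpan_le_ker_of_forall_eq fun a ha b hb => le_antisymm (hb.2 a ha.1) (ha.2 b hb.1)
  simpa [sub_eq_zero] using hker (heq ▸ vsub_mem_vectorSpan ℝ hx hy : x - y ∈ _)

end ConvexGeometry

section VertexGenerated

variable {E : Type*} [NormedAddCommGroup E] [NormedSpace ℝ E] [FiniteDimensional ℝ E]
  {𝒞 : Set (Set E)}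

theorem exists_extremePoint_two_smul_sub_mem (hcompact : ∀ K ∈ 𝒞, IsCompact K)
    (hconvex : ∀ K ∈ 𝒞, Convex ℝ K) (hsymm : ∀ K ∈ 𝒞, ∃ c, ∀ x ∈ K, (2 : ℝ) • c - x ∈ K)
    (hface : ∀ K ∈ 𝒞, ∀ f : StrongDual ℝ E, (f.toExposed K).Nonempty → f.toExposed K ∈ 𝒞)
    {K : Set E} (hK : K ∈ 𝒞) {z : E} (hz : z ∈ K) :
    ∃ v ∈ K.extremePoints ℝ, (2 : ℝ) • z - v ∈ K := by
  induction hd : Module.finrank ℝ (vectorSpan ℝ K) using Nat.strong_induction_on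
    generalizing K z with
  | _ d ih =>
  obtain ⟨c, hc⟩ := hsymm K hK
  by_cases hzc : z = c
  · obtain ⟨v, hv⟩ := (hcompact K hK).extremePoints_nonempty ⟨z, hz⟩
    exact ⟨v, hv, hzc ▸ hc v hv.1⟩
  have hcK : c ∈ K := by
    have hmid : midpoint ℝ z ((2 : ℝ) • c - z) = c := by
      rw [midpoint_eq_smul_add, invOf_eq_inv]; module
    exact hmid ▸ (hconvex K hK).midpoint_mem hz (hc z hz)
  obtain ⟨t, ht1, hpK, hpmax⟩ := (hcompact K hK).exists_farthest_mem_ray hz hzc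
  set p := c + t • (z - c)
  obtain ⟨f, hfp, x, hxK, hfx⟩ := (hconvex K hK).exists_supporting_dual_of_forall_add_smul_notMem
    hpK (vsub_mem_vectorSpan ℝ hz hcK) hpmax
  have hpF : p ∈ f.toExposed K := ⟨hpK, hfp⟩
  obtain ⟨v, hvF, hv⟩ := ih _ (hd ▸ Submodule.finrank_lt_finrank_of_lt
    (vectorSpan_toExposed_lt hxK hpK hfx)) (hface K hK f ⟨p, hpF⟩) hpF rfl
  refine ⟨v, ContinuousLinearMap.toExposed.isExposed.isExtreme.extremePoints_subset_extremePoints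
    hvF, ?_⟩
  have hcomb : (2 : ℝ) • z - v = (1 - t⁻¹) • ((2 : ℝ) • c - v) + t⁻¹ • ((2 : ℝ) • p - v) := by
    have ht0 : t ≠ 0 := (zero_lt_one.trans_le ht1).ne'
    simp only [p, smul_sub, smul_add, smul_smul]
    rw [show t⁻¹ * (2 * t) = 2 by field_simp]
    module
  rw [hcomb]
  exact hconvex K hK (hc v hvF.1.1) hv.1 (sub_nonneg.2 (inv_le_one_of_one_le₀ ht1))
    (inv_nonneg.2 (by linarith)) (sub_add_cancel 1 _)

theorem add_extremePoints_eq_two_smul (hcompact : ∀ K ∈ 𝒞, IsCompact K)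
    (hconvex : ∀ K ∈ 𝒞, Convex ℝ K) (hsymm : ∀ K ∈ 𝒞, ∃ c, ∀ x ∈ K, (2 : ℝ) • c - x ∈ K)
    (hface : ∀ K ∈ 𝒞, ∀ f : StrongDual ℝ E, (f.toExposed K).Nonempty → f.toExposed K ∈ 𝒞)
    {K : Set E} (hK : K ∈ 𝒞) : K + K.extremePoints ℝ = (2 : ℝ) • K := by
  refine Subset.antisymm ?_ ?_
  · rw [show (2 : ℝ) = 1 + 1 by norm_num, (hconvex K hK).add_smul zero_le_one zero_le_one,
      one_smul]
    exact add_subset_add_left extremePoints_subset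
  · rintro _ ⟨z, hz, rfl⟩
    obtain ⟨v, hv, hzv⟩ := exists_extremePoint_two_smul_sub_mem hcompact hconvex hsymm hface hK hz
    exact ⟨_, hzv, v, hv, sub_add_cancel _ _⟩

end VertexGenerated

section Zonotope

variable {E : Type*} [AddCommGroup E] [Module ℝ E]

theorem add_sub_mem_segment {a b x : E} (hx : x ∈ segment ℝ a b) : a + b - x ∈ segment ℝ a b := by
  obtain ⟨s, t, hs, ht, hst, rfl⟩ := hx
  obtain rfl : s = 1 - t := by linarith
  exact ⟨t, 1 - t, ht, hs, by ring, by module⟩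

theorem sum_add_sub_mem_sum_segment {ι : Type*} [Fintype ι] (a b : ι → E) {x : E}
    (hx : x ∈ ∑ i, segment ℝ (a i) (b i)) :
    ∑ i, (a i + b i) - x ∈ ∑ i, segment ℝ (a i) (b i) := by
  obtain ⟨g, hg, rfl⟩ := (Set.mem_fintype_sum _ _).1 hx
  rw [← Finset.sum_sub_distrib]
  exact (Set.mem_fintype_sum _ _).2 ⟨_, fun i => add_sub_mem_segment (hg i), rfl⟩

variable [TopologicalSpace E]

theorem isCompact_sum_segment [IsTopologicalAddGroup E] [ContinuousSMul ℝ E] {ι : Type*}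
    [Fintype ι] (a b : ι → E) : IsCompact (∑ i, segment ℝ (a i) (b i)) := by
  refine Finset.sum_induction _ IsCompact (fun _ _ => IsCompact.add) isCompact_singleton
    fun i _ => ?_
  rw [← convexHull_pair (𝕜 := ℝ)]
  exact (toFinite _).isCompact_convexHull (𝕜 := ℝ)

namespace ContinuousLinearMap

variable (f : StrongDual ℝ E)

theorem toExposed_add (A B : Set E) : f.toExposed (A + B) = f.toExposed A + f.toExposed B := by
  ext x
  constructor
  · rintro ⟨⟨a, ha, b, hb, rfl⟩, hmax⟩
    refine ⟨a, ⟨ha, fun a' ha' => ?_⟩, b, ⟨hb, fun b' hb' => ?_⟩, rfl⟩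
    · simpa using hmax _ (add_mem_add ha' hb)
    · simpa using hmax _ (add_mem_add ha hb')
  · rintro ⟨a, ⟨ha, ha'⟩, b, ⟨hb, hb'⟩, rfl⟩
    refine ⟨add_mem_add ha hb, ?_⟩
    rintro _ ⟨a', ha'', b', hb'', rfl⟩
    simpa using add_le_add (ha' a' ha'') (hb' b' hb'')

theorem toExposed_zero : f.toExposed (0 : Set E) = 0 := by
  refine subset_antisymm (fun x hx => hx.1) ?_
  rintro _ rfl
  exact ⟨rfl, fun y hy => (Set.mem_zero.1 hy) ▸ le_rfl⟩

theorem toExposed_sum {ι : Type*} (s : Finset ι) (A : ι → Set E) :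
    f.toExposed (∑ i ∈ s, A i) = ∑ i ∈ s, f.toExposed (A i) := by
  induction s using Finset.cons_induction with
  | empty => simpa using f.toExposed_zero
  | cons i s hi ih => rw [Finset.sum_cons, Finset.sum_cons, f.toExposed_add, ih]

theorem exists_apply_of_mem_segment {a b x : E} (hx : x ∈ segment ℝ a b) :
    ∃ t ∈ Icc (0 : ℝ) 1, x = a + t • (b - a) ∧ f x = f a + t * (f b - f a) := by
  obtain ⟨t, ht, rfl⟩ := (segment_eq_image' ℝ a b).subset hx
  exact ⟨t, ht, rfl, by simp [map_sub]⟩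

theorem toExposed_segment_of_eq {a b : E} (h : f a = f b) :
    f.toExposed (segment ℝ a b) = segment ℝ a b := by
  refine subset_antisymm (fun x hx => hx.1) fun x hx => ⟨hx, fun y hy => ?_⟩
  obtain ⟨s, -, -, hfy⟩ := f.exists_apply_of_mem_segment hy
  obtain ⟨t, -, -, hfx⟩ := f.exists_apply_of_mem_segment hx
  simp [hfx, hfy, h]

theorem toExposed_segment_of_lt {a b : E} (h : f a < f b) :
    f.toExposed (segment ℝ a b) = {b} := by
  refine subset_antisymm ?_ ?_
  · rintro x ⟨hx, hmax⟩
    obtain ⟨t, ⟨-, ht1⟩, rfl, hfx⟩ := f.exists_apply_of_mem_segment hx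
    have := hmax b (right_mem_segment ℝ a b)
    obtain rfl : t = 1 := by nlinarith
    simp
  · refine singleton_subset_iff.2 ⟨right_mem_segment ℝ a b, fun y hy => ?_⟩
    obtain ⟨t, ⟨-, ht1⟩, -, hfy⟩ := f.exists_apply_of_mem_segment hy
    nlinarith

theorem exists_toExposed_segment_eq (a b : E) :
    ∃ a' b' : E, f.toExposed (segment ℝ a b) = segment ℝ a' b' := by
  rcases lt_trichotomy (f a) (f b) with h | h | h
  · exact ⟨b, b, by rw [f.toExposed_segment_of_lt h, segment_same]⟩
  · exact ⟨a, b, f.toExposed_segment_of_eq h⟩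
  · exact ⟨a, a, by rw [segment_symm, f.toExposed_segment_of_lt h, segment_same]⟩

theorem exists_toExposed_sum_segment_eq {ι : Type*} [Fintype ι] (a b : ι → E) :
    ∃ a' b' : ι → E,
      f.toExposed (∑ i, segment ℝ (a i) (b i)) = ∑ i, segment ℝ (a' i) (b' i) := by
  choose a' b' h using fun i => f.exists_toExposed_segment_eq (a i) (b i)
  exact ⟨a', b', by rw [f.toExposed_sum]; exact Finset.sum_congr rfl fun i _ => h i⟩

end ContinuousLinearMap

end Zonotope

theorem stmt_7 {n : ℕ} (Z : Set (EuclideanSpace ℝ (Fin n))) (hZ : IsZonotope Z) :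
    Z + Z.extremePoints ℝ = (2 : ℝ) • Z := by
  refine add_extremePoints_eq_two_smul (𝒞 := {K | IsZonotope K}) ?_ ?_ ?_ ?_ hZ
  · rintro _ ⟨m, a, b, rfl⟩
    exact isCompact_sum_segment a b
  · rintro _ ⟨m, a, b, rfl⟩
    exact convex_sum _ fun i _ => convex_segment _ _
  · rintro _ ⟨m, a, b, rfl⟩
    refine ⟨(2 : ℝ)⁻¹ • ∑ i, (a i + b i), fun x hx => ?_⟩
    rw [smul_inv_smul₀ two_ne_zero]
    exact sum_add_sub_mem_sum_segment a b hx
  · rintro _ ⟨m, a, b, rfl⟩ f -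
    obtain ⟨a', b', h⟩ := f.exists_toExposed_sum_segment_eq a b
    exact ⟨m, a', b', h⟩
end

section
/- Let P ⊆ R^2 be a polytope with non-empty interior and u ∈ ∂P. Then there exists r > 0 such that (u + rB) ∩ P = (u + rB) ∩ (P+u)/2, where B is the closed unit Euclidean ball in R^2. -/
open Set Pointwise Metric

/-!
By Carathéodory, a polytope is a finite union of simplices spanned by some of its vertices.
Extending the vertices of a simplex to an affine basis, the simplex is cut out by the conditions
`coord i ≥ 0` and `coord i = 0`, and near `u` each of them is preserved by the homothety of
centre `u` and ratio `2`, i.e. by `x ↦ 2x - u`; the simplices missing `u` stay away from `u`.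
Hence near `u`, `x ∈ P` forces `2x - u ∈ P`, i.e. `x ∈ (P + u)/2`; the reverse inclusion is
convexity.
-/

open Filter Topology

section Convexity

variable {k E ι : Type*}

theorem AffineIndependent.exists_affineBasis_image_eq [DivisionRing k] [AddCommGroup E]
    [Module k E] {T : Set E} (hT : AffineIndependent k ((↑) : T → E)) :
    ∃ (s : Set E) (b : AffineBasis s k E) (I : Set s), b '' I = T := by
  obtain ⟨s, hTs, hs, hspan⟩ := exists_subset_affineIndependent_affineSpan_eq_top hT
  exact ⟨s, ⟨(↑), hs, by rwa [Subtype.range_coe]⟩, (↑) ⁻¹' T,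
    (Subtype.image_preimage_coe s T).trans (inter_eq_right.2 hTs)⟩

variable [Field k] [LinearOrder k] [IsStrictOrderedRing k] [AddCommGroup E] [Module k E]

theorem AffineBasis.convexHull_image_eq [Fintype ι] (b : AffineBasis ι k E) (I : Set ι) :
    convexHull k (b '' I) = {x | ∀ i, 0 ≤ b.coord i x} ∩ {x | ∀ i ∉ I, b.coord i x = 0} := by
  classical
  apply Subset.antisymm
  · refine convexHull_min ?_ ?_
    · rintro _ ⟨j, hj, rfl⟩
      refine ⟨fun i => ?_, fun i hi => b.coord_apply_ne (by rintro rfl; exact hi hj)⟩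
      rw [b.coord_apply]
      split_ifs <;> norm_num
    · rw [← b.convexHull_eq_nonneg_coord]
      refine (convex_convexHull k _).inter fun x hx y hy s t _ _ hst i hi => ?_
      rw [Convex.combo_affine_apply hst, hx i hi, hy i hi, smul_zero, smul_zero, add_zero]
  · rintro x ⟨hnonneg, hzero⟩
    have hzero' : ∀ i ∈ Finset.univ, i ∉ Finset.univ.filter (· ∈ I) → b.coord i x = 0 :=
      fun i _ hi => hzero i (by simpa using hi)
    have hsum : ∑ i ∈ Finset.univ.filter (· ∈ I), b.coord i x = 1 := by
      rw [Finset.sum_subset (Finset.filter_subset _ _) hzero', b.sum_coord_apply_eq_one x]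
    rw [← b.affineCombination_coord_eq_self x,
      affineCombination_eq_centerMass (b.sum_coord_apply_eq_one x),
      ← Finset.centerMass_subset _ (Finset.filter_subset _ _) hzero']
    exact Finset.centerMass_mem_convexHull _ (fun i _ => hnonneg i) (by rw [hsum]; exact one_pos)
      fun i hi => mem_image_of_mem b (by simpa using hi)

theorem mem_inv_two_smul_add_singleton_iff {K : Set E} {u x : E} :
    x ∈ (2 : k)⁻¹ • (K + {u}) ↔ AffineMap.homothety u (2 : k) x ∈ K := by
  rw [add_singleton, mem_inv_smul_set_iff₀ two_ne_zero, mem_image, AffineMap.homothety_apply,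
    vsub_eq_sub, vadd_eq_add]
  constructor
  · rintro ⟨y, hy, hyx⟩
    convert hy using 1
    rw [smul_sub, ← hyx]
    module
  · exact fun hx => ⟨_, hx, by module⟩

theorem Convex.mem_of_homothety_mem {K : Set E} (hK : Convex k K) {u x : E} (hu : u ∈ K) {t : k}
    (ht : 1 ≤ t) (hx : AffineMap.homothety u t x ∈ K) : x ∈ K := by
  have ht0 : t ≠ 0 := (zero_lt_one.trans_le ht).ne'
  convert hK.lineMap_mem hu hx ⟨inv_nonneg.2 (zero_le_one.trans ht), inv_le_one_of_one_le₀ ht⟩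
  rw [← AffineMap.homothety_eq_lineMap, ← AffineMap.homothety_mul_apply, inv_mul_cancel₀ ht0,
    AffineMap.homothety_one, AffineMap.id_apply]

end Convexity

section LocalStability

variable {E ι : Type*} [NormedAddCommGroup E] [NormedSpace ℝ E]

theorem eventually_homothety_nonneg {c t : ℝ} (hc : 0 ≤ c) (ht : 0 ≤ t) :
    ∀ᶠ y in 𝓝 c, 0 ≤ y → 0 ≤ AffineMap.homothety c t y := by
  rcases hc.eq_or_lt with rfl | hc
  · refine Eventually.of_forall fun y hy => ?_
    simpa [AffineMap.homothety_apply] using mul_nonneg ht hy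
  · have hlim : Tendsto (AffineMap.homothety c t) (𝓝 c) (𝓝 c) := by
      simpa using (AffineMap.homothety_continuous c t).tendsto c
    exact (hlim.eventually (lt_mem_nhds hc)).mono fun y hy _ => hy.le

theorem AffineBasis.eventually_homothety_mem_convexHull_image [FiniteDimensional ℝ E] [Fintype ι]
    (b : AffineBasis ι ℝ E) (I : Set ι) {u : E} (hu : u ∈ convexHull ℝ (b '' I)) {t : ℝ}
    (ht : 0 ≤ t) :
    ∀ᶠ x in 𝓝 u, x ∈ convexHull ℝ (b '' I) → AffineMap.homothety u t x ∈ convexHull ℝ (b '' I) := by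
  rw [b.convexHull_image_eq] at hu ⊢
  have hcoord (i : ι) (x : E) :
      b.coord i (AffineMap.homothety u t x) = AffineMap.homothety (b.coord i u) t (b.coord i x) := by
    simp only [AffineMap.homothety_eq_lineMap, AffineMap.apply_lineMap]
  have hnonneg : ∀ i, ∀ᶠ x in 𝓝 u, 0 ≤ b.coord i x → 0 ≤ b.coord i (AffineMap.homothety u t x) :=
    fun i => by
      simpa only [hcoord] using ((b.coord i).continuous_of_finiteDimensional.tendsto u).eventually
        (eventually_homothety_nonneg (hu.1 i) ht)
  filter_upwards [eventually_all.2 hnonneg] with x hx ⟨hx_nonneg, hx_zero⟩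
  refine ⟨fun i => hx i (hx_nonneg i), fun i hi => ?_⟩
  rw [hcoord, hx_zero i hi, hu.2 i hi, AffineMap.homothety_apply_same]

theorem eventually_homothety_mem_convexHull [FiniteDimensional ℝ E] (S : Finset E) (u : E) {t : ℝ}
    (ht : 0 ≤ t) :
    ∀ᶠ x in 𝓝 u, x ∈ convexHull ℝ (S : Set E) →
      AffineMap.homothety u t x ∈ convexHull ℝ (S : Set E) := by
  have hsimplex (T : Finset E) (hT : AffineIndependent ℝ ((↑) : T → E)) :
      ∀ᶠ x in 𝓝 u, x ∈ convexHull ℝ (T : Set E) →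
        AffineMap.homothety u t x ∈ convexHull ℝ (T : Set E) := by
    by_cases huT : u ∈ convexHull ℝ (T : Set E)
    · obtain ⟨s, b, I, hbT⟩ := hT.exists_affineBasis_image_eq
      have := b.finite
      have := Fintype.ofFinite s
      rw [← hbT] at huT ⊢
      exact b.eventually_homothety_mem_convexHull_image I huT ht
    · have hfar := (T.finite_toSet.isClosed_convexHull ℝ).isOpen_compl.mem_nhds huT
      exact mem_of_superset hfar fun x hx hxT => absurd hxT hx
  have hfin : {T : Finset E | (T : Set E) ⊆ S ∧ AffineIndependent ℝ ((↑) : T → E)}.Finite :=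
    S.powerset.finite_toSet.subset fun T hT => by simpa using hT.1
  rw [convexHull_eq_union]
  filter_upwards [(eventually_all_finite hfin).2 fun T hT => hsimplex T hT.2] with x hx
  simp only [mem_iUnion]
  rintro ⟨T, hTS, hT, hxT⟩
  exact ⟨T, hTS, hT, hx T ⟨hTS, hT⟩ hxT⟩

end LocalStability

theorem stmt_10_general (P : Set (EuclideanSpace ℝ (Fin 2))) (hP : IsPolytope P)
    (u : EuclideanSpace ℝ (Fin 2)) (hu : u ∈ frontier P) :
    ∃ r : ℝ, 0 < r ∧
      Metric.closedBall u r ∩ P =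
        Metric.closedBall u r ∩ (((2 : ℝ)⁻¹) • (P + ({u} : Set (EuclideanSpace ℝ (Fin 2))))) := by
  obtain ⟨S, rfl⟩ := hP
  have huP : u ∈ convexHull ℝ (S : Set _) :=
    (S.finite_toSet.isClosed_convexHull ℝ).frontier_subset hu
  obtain ⟨r, hr, hball⟩ :=
    nhds_basis_closedBall.eventually_iff.1 (eventually_homothety_mem_convexHull S u zero_le_two)
  refine ⟨r, hr, ?_⟩
  ext x
  simp only [mem_inter_iff, mem_inv_two_smul_add_singleton_iff, and_congr_right_iff]
  exact fun hx => ⟨hball hx, (convex_convexHull ℝ _).mem_of_homothety_mem huP one_le_two⟩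

theorem stmt_10 (P : Set (EuclideanSpace ℝ (Fin 2))) (hP : IsPolytope P)
    (hint : (interior P).Nonempty) (u : EuclideanSpace ℝ (Fin 2)) (hu : u ∈ frontier P) :
    ∃ r : ℝ, 0 < r ∧
      Metric.closedBall u r ∩ P =
        Metric.closedBall u r ∩ (((2 : ℝ)⁻¹) • (P + ({u} : Set (EuclideanSpace ℝ (Fin 2))))) :=
  stmt_10_general P hP u hu
end

section
/- Let λ ∈ [1/(n+1), 1/2] and let P ⊆ R^n be a centrally symmetric polytope (P = -P) such that ∂P ⊆ (1-λ)P + λV(P). Then P = (1-λ)P + λV(P). -/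
open Set Pointwise Metric

/-!
Frontier points are covered by hypothesis. Any other point of `P` is `g • b` with `0 ≤ g ≤ 1` and
`b = (1 - λ) • p + λ • v` on the frontier (`g` is its gauge; for `0` take `g = 0` and `p = v` any
extreme point), and
`g • b = (1 - λ) • (g • p + (1 - g) • (λ / (1 - λ)) • (-v)) + λ • v`,
where the bracket lies in `P` because `-v ∈ P` by symmetry and `λ / (1 - λ) ≤ 1` for `λ ≤ 1 / 2`.
-/

open scoped Topology

section Algebraic

variable {E : Type*} [AddCommGroup E] [Module ℝ E]

theorem smul_combo_mem_smul_add_smul {s t : Set E} (hs : Convex ℝ s) (hs₀ : (0 : E) ∈ s)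
    {l g : ℝ} (hl₀ : 0 ≤ l) (hl : l ≤ 1 / 2) (hg₀ : 0 ≤ g) (hg₁ : g ≤ 1)
    {p v : E} (hp : p ∈ s) (hv : v ∈ t) (hnv : -v ∈ s) :
    g • ((1 - l) • p + l • v) ∈ (1 - l) • s + l • t := by
  have hl₁ : 0 < 1 - l := by linarith
  have hq : (l / (1 - l)) • -v ∈ s :=
    hs.smul_mem_of_zero_mem hs₀ hnv ⟨by positivity, (div_le_one hl₁).2 (by linarith)⟩
  have hpq : g • p + (1 - g) • (l / (1 - l)) • -v ∈ s := hs hp hq hg₀ (by linarith) (by ring)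
  refine ⟨_, smul_mem_smul_set hpq, _, smul_mem_smul_set hv, ?_⟩
  match_scalars
  · ring
  · field_simp
    ring

end Algebraic

theorem neg_mem_interior_of_neg_eq {G : Type*} [TopologicalSpace G] [InvolutiveNeg G]
    [ContinuousNeg G] {s : Set G} (hsym : -s = s) {x : G} (hx : x ∈ interior s) :
    -x ∈ interior s := by
  rw [← hsym]
  change -x ∈ interior ((Homeomorph.neg G) ⁻¹' s)
  rw [← Homeomorph.preimage_interior]
  simpa using hx

section Topological

variable {E : Type*} [NormedAddCommGroup E] [NormedSpace ℝ E]

theorem Convex.zero_mem_interior_of_neg_eq {s : Set E} (hs : Convex ℝ s) (hsym : -s = s)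
    {x : E} (hx : x ∈ interior s) : (0 : E) ∈ interior s := by
  have hmid := hs.interior hx (neg_mem_interior_of_neg_eq hsym hx) (a := 1 / 2) (b := 1 / 2)
    (by norm_num) (by norm_num) (by norm_num)
  rwa [← smul_add, add_neg_cancel, smul_zero] at hmid

theorem Convex.exists_mem_frontier_smul_eq {s : Set E} (hs : Convex ℝ s)
    (hb : Bornology.IsBounded s) (hs₀ : s ∈ 𝓝 (0 : E)) {x : E} (hx : x ∈ s) (hx₀ : x ≠ 0) :
    ∃ b ∈ frontier s, ∃ g ∈ Icc (0 : ℝ) 1, g • b = x := by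
  have hg : 0 < gauge s x :=
    (gauge_pos (absorbent_nhds_zero hs₀) (NormedSpace.isVonNBounded_of_isBounded ℝ hb)).2 hx₀
  refine ⟨(gauge s x)⁻¹ • x, ?_, gauge s x, ⟨hg.le, gauge_le_one_of_mem hx⟩, ?_⟩
  · rw [← gauge_eq_one_iff_mem_frontier hs hs₀, gauge_smul_of_nonneg (inv_nonneg.2 hg.le),
      smul_eq_mul, inv_mul_cancel₀ hg.ne']
  · rw [smul_smul, mul_inv_cancel₀ hg.ne', one_smul]

theorem Convex.eq_smul_add_smul_extremePoints {P : Set E} (hconv : Convex ℝ P)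
    (hcomp : IsCompact P) (hsym : -P = P) {l : ℝ} (hl₀ : 0 ≤ l) (hl : l ≤ 1 / 2)
    (hbd : frontier P ⊆ (1 - l) • P + l • P.extremePoints ℝ) :
    P = (1 - l) • P + l • P.extremePoints ℝ := by
  refine Subset.antisymm (fun x hx ↦ ?_) ?_
  swap
  · exact (add_subset_add_left (smul_set_mono extremePoints_subset)).trans
      (hconv.set_combo_subset (by linarith) hl₀ (by ring))
  rw [← hcomp.isClosed.closure_eq, closure_eq_interior_union_frontier] at hx
  rcases hx with hxi | hxf
  swap
  · exact hbd hxf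
  have h₀ : P ∈ 𝓝 (0 : E) :=
    mem_interior_iff_mem_nhds.1 (hconv.zero_mem_interior_of_neg_eq hsym hxi)
  have hneg : ∀ v ∈ P, -v ∈ P := fun v hv ↦ hsym ▸ neg_mem_neg.2 hv
  rcases eq_or_ne x 0 with rfl | hx₀
  · obtain ⟨v, hv⟩ := hcomp.extremePoints_nonempty ⟨0, interior_subset hxi⟩
    simpa using smul_combo_mem_smul_add_smul hconv (mem_of_mem_nhds h₀) hl₀ hl le_rfl zero_le_one
      hv.1 hv (hneg v hv.1)
  · obtain ⟨b, hb, g, ⟨hg₀, hg₁⟩, rfl⟩ := hconv.exists_mem_frontier_smul_eq hcomp.isBounded h₀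
      (interior_subset hxi) hx₀
    obtain ⟨_, ⟨p, hp, rfl⟩, _, ⟨v, hv, rfl⟩, rfl⟩ := hbd hb
    exact smul_combo_mem_smul_add_smul hconv (mem_of_mem_nhds h₀) hl₀ hl hg₀ hg₁ hp hv
      (hneg v hv.1)

end Topological

theorem stmt_13 {n : ℕ} (l : ℝ) (hl : l ∈ Set.Icc ((1 : ℝ) / ((n : ℝ) + 1)) (1 / 2))
    (P : Set (EuclideanSpace ℝ (Fin n))) (hP : IsPolytope P) (hsym : P = -P)
    (hbd : frontier P ⊆ (1 - l) • P + l • (P.extremePoints ℝ)) :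
    P = (1 - l) • P + l • (P.extremePoints ℝ) := by
  obtain ⟨S, rfl⟩ := hP
  exact (convex_convexHull ℝ _).eq_smul_add_smul_extremePoints
    (S.finite_toSet.isCompact_convexHull ℝ) hsym.symm ((by positivity : (0 : ℝ) ≤ _).trans hl.1)
    hl.2 hbd
end

section
/- Let λ ∈ [1/(n+1), 1/2] and P ⊆ R^n a polytope. Then P = (1-λ)P + λV(P) if and only if P equals the closure of the infinite Minkowski sum ∑_{i=0}^∞ (1-λ)^i λ V(P), i.e., the closure of the set of all finite sums ∑_{i=0}^k (1-λ)^i λ v_i with v_i ∈ V(P) together with all limits of such sums. -/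
/-!
Write `S` for the infinite Minkowski sum `∑ (1 - λ)^i λ V`. Splitting off the first term of a
series shows `S = (1 - λ) S + λ V`, and the partial sums, completed by `(1 - λ)^k` times a point
of `P`, are convex combinations, so `S` lies in every closed convex set containing `V`.

If `P = (1 - λ) P + λ V`, unfolding this decomposition `k` times puts every point of `P` within
`(1 - λ)^k diam P` of `S`, so `P = cls S`. Conversely, if `P = cls S` then `S ⊆ P`, hence
`S = (1 - λ) S + λ V ⊆ (1 - λ) P + λ V`; the right side is closed, so it contains `P`, and it is
contained in `P` by convexity.
-/

open Set Pointwise Metric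

section GeomMinkowskiSum

variable {E : Type*} [NormedAddCommGroup E] [NormedSpace ℝ E] {l : ℝ} {P V : Set E}

def geomMinkowskiSum (l : ℝ) (V : Set E) : Set E :=
  {x | ∃ v : ℕ → E, (∀ i, v i ∈ V) ∧ HasSum (fun i => ((1 - l) ^ i * l) • v i) x}

theorem subset_geomMinkowskiSum (hl0 : 0 < l) (hl1 : l < 1) : V ⊆ geomMinkowskiSum l V := by
  intro w hw
  refine ⟨fun _ => w, fun _ => hw, ?_⟩
  have hgeom := (hasSum_geometric_of_lt_one (by linarith) (by linarith : 1 - l < 1)).mul_right l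
  rw [sub_sub_cancel, inv_mul_cancel₀ hl0.ne'] at hgeom
  simpa using hgeom.smul_const w

theorem smul_add_smul_mem_geomMinkowskiSum {y w : E} (hy : y ∈ geomMinkowskiSum l V)
    (hw : w ∈ V) : (1 - l) • y + l • w ∈ geomMinkowskiSum l V := by
  obtain ⟨v, hv, hsum⟩ := hy
  refine ⟨fun | 0 => w | i + 1 => v i, fun | 0 => hw | i + 1 => hv i, ?_⟩
  refine (hasSum_nat_add_iff' 1).1 ?_
  convert hsum.const_smul (1 - l) using 1
  · ext i
    simp only [smul_smul, pow_succ]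
    ring_nf
  · simp

theorem exists_eq_smul_add_smul_of_mem_geomMinkowskiSum (hl : l ≠ 1) {x : E}
    (hx : x ∈ geomMinkowskiSum l V) :
    ∃ y ∈ geomMinkowskiSum l V, ∃ w ∈ V, x = (1 - l) • y + l • w := by
  obtain ⟨v, hv, hsum⟩ := hx
  have hl' : 1 - l ≠ 0 := sub_ne_zero.2 hl.symm
  refine ⟨(1 - l)⁻¹ • (x - l • v 0), ⟨fun i => v (i + 1), fun i => hv _, ?_⟩, v 0, hv 0, ?_⟩
  · have htail := (hasSum_nat_add_iff' 1).2 hsum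
    convert htail.const_smul (1 - l)⁻¹ using 1
    · ext i
      simp only [smul_smul, pow_succ]
      field_simp
    · simp
  · rw [smul_inv_smul₀ hl']
    abel

theorem smul_add_smul_geomMinkowskiSum (hl : l ≠ 1) :
    (1 - l) • geomMinkowskiSum l V + l • V = geomMinkowskiSum l V := by
  ext x
  simp only [Set.mem_add, Set.mem_smul_set]
  constructor
  · rintro ⟨_, ⟨y, hy, rfl⟩, _, ⟨w, hw, rfl⟩, rfl⟩
    exact smul_add_smul_mem_geomMinkowskiSum hy hw
  · intro hx
    obtain ⟨y, hy, w, hw, rfl⟩ := exists_eq_smul_add_smul_of_mem_geomMinkowskiSum hl hx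
    exact ⟨_, ⟨y, hy, rfl⟩, _, ⟨w, hw, rfl⟩, rfl⟩

theorem Convex.sum_range_add_pow_smul_mem (hP : Convex ℝ P) (hl0 : 0 ≤ l) (hl1 : l ≤ 1)
    {v : ℕ → E} (hv : ∀ i, v i ∈ P) (k : ℕ) {p : E} (hp : p ∈ P) :
    ∑ i ∈ Finset.range k, ((1 - l) ^ i * l) • v i + (1 - l) ^ k • p ∈ P := by
  induction k generalizing p with
  | zero => simpa using hp
  | succ k ih =>
    have hcombo : l • v k + (1 - l) • p ∈ P := hP (hv k) hp hl0 (by linarith) (by ring)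
    convert ih hcombo using 1
    rw [Finset.sum_range_succ, pow_succ]
    module

theorem geomMinkowskiSum_subset (hl0 : 0 < l) (hl1 : l ≤ 1) (hP : Convex ℝ P)
    (hPc : IsClosed P) (hVP : V ⊆ P) : geomMinkowskiSum l V ⊆ P := by
  rintro x ⟨v, hv, hsum⟩
  have hvP : ∀ i, v i ∈ P := fun i => hVP (hv i)
  have hpow : Filter.Tendsto (fun k : ℕ => (1 - l) ^ k • v 0) Filter.atTop (nhds 0) := by
    simpa using (tendsto_pow_atTop_nhds_zero_of_lt_one (r := 1 - l) (by linarith)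
      (by linarith)).smul_const (v 0)
  refine hPc.mem_of_tendsto (by simpa using hsum.tendsto_sum_nat.add hpow)
    (Filter.Eventually.of_forall fun k => ?_)
  exact hP.sum_range_add_pow_smul_mem hl0.le hl1 hvP k (hvP 0)

theorem exists_mem_geomMinkowskiSum_dist_le (hl0 : 0 < l) (hl1 : l < 1)
    (hPb : Bornology.IsBounded P) (hVP : V ⊆ P) (hfix : P ⊆ (1 - l) • P + l • V) (k : ℕ)
    {x : E} (hx : x ∈ P) :
    ∃ y ∈ geomMinkowskiSum l V, dist x y ≤ (1 - l) ^ k * diam P := by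
  induction k generalizing x with
  | zero =>
    obtain ⟨-, -, -, ⟨w, hw, rfl⟩, -⟩ := hfix hx
    exact ⟨w, subset_geomMinkowskiSum hl0 hl1 hw, by
      simpa using dist_le_diam_of_mem hPb hx (hVP hw)⟩
  | succ k ih =>
    obtain ⟨-, ⟨q, hq, rfl⟩, -, ⟨w, hw, rfl⟩, rfl⟩ := hfix hx
    obtain ⟨y, hy, hdist⟩ := ih hq
    refine ⟨(1 - l) • y + l • w, smul_add_smul_mem_geomMinkowskiSum hy hw, ?_⟩
    calc dist ((1 - l) • q + l • w) ((1 - l) • y + l • w) = (1 - l) * dist q y := by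
          rw [dist_add_right, dist_smul₀, Real.norm_of_nonneg (by linarith)]
      _ ≤ (1 - l) * ((1 - l) ^ k * diam P) := by gcongr
      _ = (1 - l) ^ (k + 1) * diam P := by ring

theorem subset_closure_geomMinkowskiSum (hl0 : 0 < l) (hl1 : l < 1)
    (hPb : Bornology.IsBounded P) (hVP : V ⊆ P) (hfix : P ⊆ (1 - l) • P + l • V) :
    P ⊆ closure (geomMinkowskiSum l V) := by
  intro x hx
  rw [Metric.mem_closure_iff]
  intro ε hε
  have hpow : Filter.Tendsto (fun k : ℕ => (1 - l) ^ k * diam P) Filter.atTop (nhds 0) := by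
    simpa using (tendsto_pow_atTop_nhds_zero_of_lt_one (r := 1 - l) (by linarith)
      (by linarith)).mul_const (diam P)
  obtain ⟨k, hk⟩ := (hpow.eventually (gt_mem_nhds hε)).exists
  obtain ⟨y, hy, hdist⟩ := exists_mem_geomMinkowskiSum_dist_le hl0 hl1 hPb hVP hfix k hx
  exact ⟨y, hy, hdist.trans_lt hk⟩

theorem eq_smul_add_smul_iff_eq_closure_geomMinkowskiSum (hl0 : 0 < l) (hl1 : l < 1)
    (hP : Convex ℝ P) (hPc : IsCompact P) (hV : IsClosed V) (hVP : V ⊆ P) :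
    P = (1 - l) • P + l • V ↔ P = closure (geomMinkowskiSum l V) := by
  constructor
  · intro hfix
    exact (subset_closure_geomMinkowskiSum hl0 hl1 hPc.isBounded hVP hfix.le).antisymm
      (closure_minimal (geomMinkowskiSum_subset hl0 hl1.le hP hPc.isClosed hVP) hPc.isClosed)
  · intro hP_eq
    have hsum_closed : IsClosed ((1 - l) • P + l • V) :=
      (hV.smul₀ l).add_left_of_isCompact (hPc.smul (1 - l))
    refine le_antisymm ?_ ?_
    · calc P = closure (geomMinkowskiSum l V) := hP_eq
        _ ⊆ (1 - l) • P + l • V := by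
          refine closure_minimal ?_ hsum_closed
          rw [← smul_add_smul_geomMinkowskiSum hl1.ne]
          gcongr
          exact hP_eq ▸ subset_closure
    · calc (1 - l) • P + l • V ⊆ (1 - l) • P + l • P := by gcongr
        _ = P := by rw [← hP.add_smul (by linarith) hl0.le, sub_add_cancel, one_smul]

end GeomMinkowskiSum

theorem stmt_16 {n : ℕ} (l : ℝ) (hl : l ∈ Set.Icc ((1 : ℝ) / ((n : ℝ) + 1)) (1 / 2))
    (P : Set (EuclideanSpace ℝ (Fin n))) (hP : IsPolytope P) :
    (P = (1 - l) • P + l • (P.extremePoints ℝ)) ↔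
      P = closure {x : EuclideanSpace ℝ (Fin n) |
        ∃ v : ℕ → EuclideanSpace ℝ (Fin n), (∀ i, v i ∈ P.extremePoints ℝ) ∧
          HasSum (fun i => ((1 - l) ^ i * l) • v i) x} := by
  obtain ⟨S, rfl⟩ := hP
  have hl0 : 0 < l := lt_of_lt_of_le (by positivity) hl.1
  have hl1 : l < 1 := lt_of_le_of_lt hl.2 (by norm_num)
  have hV : ((convexHull ℝ (S : Set (EuclideanSpace ℝ (Fin n)))).extremePoints ℝ).Finite :=
    S.finite_toSet.subset extremePoints_convexHull_subset
  exact eq_smul_add_smul_iff_eq_closure_geomMinkowskiSum hl0 hl1 (convex_convexHull ℝ _)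
    (S.finite_toSet.isCompact_convexHull ℝ) hV.isClosed extremePoints_subset
end

section
/- Let P ⊆ R^n be a polytope with m vertices satisfying P = aP + (1-a)V(P) for some a ∈ (0,1). Then for every positive integer k, the covering number N(P, a^k P) ≤ m^k, i.e., P can be covered by at most m^k translates of a^k P. -/
open Set Pointwise Metric

theorem stmt_17 {n : ℕ} (P : Set (EuclideanSpace ℝ (Fin n))) (hP : IsPolytope P)
    (m : ℕ) (hm : (P.extremePoints ℝ).ncard = m) (a : ℝ) (ha : a ∈ Set.Ioo (0:ℝ) 1)
    (hVG : P = a • P + (1 - a) • (P.extremePoints ℝ)) (k : ℕ) (hk : 0 < k) :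
    ∃ t : Finset (EuclideanSpace ℝ (Fin n)), t.card ≤ m ^ k ∧
      P ⊆ ⋃ x ∈ t, x +ᵥ (a ^ k • P) := by
  obtain ⟨S, hS⟩ := hP
  have hVfin : (P.extremePoints ℝ).Finite := by
    apply Set.Finite.subset S.finite_toSet
    rw [hS]
    exact extremePoints_convexHull_subset
  set Vf : Finset (EuclideanSpace ℝ (Fin n)) := hVfin.toFinset with hVf
  classical
  have hVcard : Vf.card = m := by
    rw [← hm, Set.ncard_eq_toFinset_card _ hVfin]
  have hVmem : ∀ v, v ∈ Vf ↔ v ∈ P.extremePoints ℝ := fun v => hVfin.mem_toFinset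
  have key : ∀ p ∈ P, ∃ q ∈ P, ∃ v ∈ Vf, p = a • q + (1 - a) • v := by
    intro p hp
    rw [hVG] at hp
    obtain ⟨x, hx, y, hy, hxy⟩ := Set.mem_add.mp hp
    obtain ⟨q, hq, rfl⟩ := hx
    obtain ⟨v, hv, rfl⟩ := hy
    exact ⟨q, hq, v, (hVmem v).mpr hv, hxy.symm⟩
  have main : ∀ j : ℕ, ∃ t : Finset (EuclideanSpace ℝ (Fin n)), t.card ≤ m ^ (j + 1) ∧
      ∀ p ∈ P, ∃ x ∈ t, ∃ q ∈ P, p = x + a ^ (j + 1) • q := by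
    intro j
    induction j with
    | zero =>
      refine ⟨Vf.image (fun v => (1 - a) • v), ?_, ?_⟩
      · simpa [hVcard] using Finset.card_image_le (s := Vf) (f := fun v => (1 - a) • v)
      · intro p hp
        obtain ⟨q, hq, v, hv, hpv⟩ := key p hp
        refine ⟨(1 - a) • v, Finset.mem_image_of_mem _ hv, q, hq, ?_⟩
        rw [hpv, pow_one]; abel
    | succ j ih =>
      obtain ⟨t, htc, ht⟩ := ih
      refine ⟨(t ×ˢ Vf).image (fun pr => a • pr.1 + (1 - a) • pr.2), ?_, ?_⟩
      · calc ((t ×ˢ Vf).image _).card ≤ (t ×ˢ Vf).card := Finset.card_image_le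
          _ = t.card * Vf.card := Finset.card_product t Vf
          _ ≤ m ^ (j + 1) * m := by
              apply Nat.mul_le_mul htc
              rw [hVcard]
          _ = m ^ (j + 1 + 1) := (pow_succ m (j + 1)).symm
      · intro p hp
        obtain ⟨q, hq, v, hv, hpv⟩ := key p hp
        obtain ⟨x, hx, r, hr, hqr⟩ := ht q hq
        refine ⟨a • x + (1 - a) • v, Finset.mem_image_of_mem _ (Finset.mem_product.mpr (⟨hx, hv⟩ : x ∈ t ∧ v ∈ Vf) : (x, v) ∈ t ×ˢ Vf),
          r, hr, ?_⟩
        rw [hpv, hqr]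
        rw [smul_add, smul_smul, ← pow_succ']
        abel
  obtain ⟨t, htc, ht⟩ := main (k - 1)
  rw [Nat.sub_add_cancel hk] at htc ht
  refine ⟨t, htc, ?_⟩
  intro p hp
  obtain ⟨x, hx, q, hq, hpq⟩ := ht p hp
  refine Set.mem_iUnion₂.mpr ⟨x, hx, ?_⟩
  exact ⟨a ^ k • q, ⟨q, hq, rfl⟩, hpq.symm⟩
end

section
/- If P ⊆ R^n is a polytope with non-empty interior satisfying λ(P) = 1/(n+1), where λ(P) = sup{λ : P = (1-λ)P + λV(P)}, then P is an n-dimensional simplex. -/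
open Set Pointwise Metric

/-!
Let `V` be the vertex set of `P`, so `P = conv V` and `V` affinely spans, whence `|V| ≥ n + 1`;
if `|V| = n + 1`, `V` is affinely independent. Otherwise we show that some `l > 1/(n+1)` lies in
the set defining `λ(P)`. By Carathéodory a point `x ∈ P` is a convex combination of an affinely
independent `t ⊆ V`. If some weight is at least `l`, then `x ∈ (1-l)P + l•v` at once. If not,
`t` has `n + 1` points and all weights are close to `1/(n+1)`. Take a vertex `w ∉ t`: since
`w ∉ conv t`, its affine coordinates in `t` have a negative entry at some `j`, and subtracting a
small multiple of this affine relation moves weight onto `w` and lifts the weight of `j` above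
`1/(n+1)` by a fixed margin. There are finitely many pairs `(t, w)`, so the margin is uniform.
-/

open Filter Topology Module

section Weights

variable {ι : Type*}

lemma Finset.exists_pos_forall_mul_lt (t : Finset ι) (a : ι → ℝ) {β : ℝ}
    (hβ : 0 < β) : ∃ s > 0, ∀ i ∈ t, s * a i < β := by
  have hsmall : ∀ᶠ s in 𝓝[>] (0 : ℝ), ∀ i ∈ t, s * a i < β :=
    (eventually_all_finset t).2 fun i _ => by
      have : Tendsto (fun s : ℝ => s * a i) (𝓝[>] 0) (𝓝 0) :=
        ((continuous_mul_const (a i)).tendsto' 0 0 (zero_mul _)).mono_left nhdsWithin_le_nhds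
      exact this.eventually_lt_const hβ
  obtain ⟨s, hs, hpos⟩ := (hsmall.and self_mem_nhdsWithin).exists
  exact ⟨s, hpos, hs⟩

variable {t : Finset ι} {c : ι → ℝ} {l : ℝ}

lemma Finset.card_eq_of_sum_eq_one_of_forall_lt {n : ℕ} (hc : ∑ i ∈ t, c i = 1)
    (hlt : ∀ i ∈ t, c i < l) (hcard : t.card ≤ n + 1) (hnl : n * l ≤ 1) : t.card = n + 1 := by
  have hne : t.Nonempty := Finset.nonempty_of_sum_ne_zero (by rw [hc]; exact one_ne_zero)
  have hsum : 1 < t.card * l := by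
    calc (1 : ℝ) = ∑ i ∈ t, c i := hc.symm
      _ < ∑ _i ∈ t, l := Finset.sum_lt_sum_of_nonempty hne hlt
      _ = t.card * l := by rw [Finset.sum_const, nsmul_eq_mul]
  have hl : 0 < l := by
    by_contra! hl
    nlinarith [(Nat.cast_nonneg t.card : (0 : ℝ) ≤ t.card)]
  by_contra hne'
  have hle : (t.card : ℝ) ≤ n := by exact_mod_cast (by omega : t.card ≤ n)
  nlinarith [mul_le_mul_of_nonneg_right hle hl.le]

lemma Finset.sub_le_of_sum_eq_one_of_forall_le (hc : ∑ i ∈ t, c i = 1) (hle : ∀ i ∈ t, c i ≤ l)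
    {i : ι} (hi : i ∈ t) : 1 - ((t.card : ℝ) - 1) * l ≤ c i := by
  classical
  have hrest : ∑ k ∈ t.erase i, c k ≤ ((t.card : ℝ) - 1) * l := by
    calc ∑ k ∈ t.erase i, c k ≤ ∑ _k ∈ t.erase i, l :=
          Finset.sum_le_sum fun k hk => hle k (Finset.mem_of_mem_erase hk)
      _ = ((t.card : ℝ) - 1) * l := by
        rw [Finset.sum_const, nsmul_eq_mul, Finset.card_erase_of_mem hi,
          Nat.cast_sub (Finset.card_pos.2 ⟨i, hi⟩), Nat.cast_one]
  linarith [Finset.add_sum_erase t c hi]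

end Weights

section Exchange

variable {E : Type*} [AddCommGroup E] [Module ℝ E]

lemma exists_sum_eq_one_of_mem_affineSpan {t : Finset E} {w : E}
    (h : w ∈ affineSpan ℝ (t : Set E)) :
    ∃ a : E → ℝ, ∑ i ∈ t, a i = 1 ∧ ∑ i ∈ t, a i • i = w := by
  classical
  rw [← Set.image_id (t : Set E)] at h
  obtain ⟨s, a, hst, ha, rfl⟩ := eq_affineCombination_of_mem_affineSpan_image h
  have hst' : s ⊆ t := by exact_mod_cast hst
  have ha' : ∑ i ∈ t, Set.indicator (↑s) a i = 1 := by
    rwa [Finset.sum_indicator_subset _ hst']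
  refine ⟨Set.indicator ↑s a, ha', ?_⟩
  rw [Finset.affineCombination_indicator_subset a id hst',
    Finset.affineCombination_eq_linear_combination _ _ _ ha']
  rfl

lemma notMem_convexHull_of_mem_extremePoints {A t : Set E} {w : E}
    (hw : w ∈ (convexHull ℝ A).extremePoints ℝ) (htA : t ⊆ A) (hwt : w ∉ t) :
    w ∉ convexHull ℝ t := fun hwt' =>
  ((convex_convexHull ℝ A).mem_extremePoints_iff_mem_sdiff_convexHull_sdiff.1 hw).2 <|
    convexHull_mono (fun x hx => show x ∈ convexHull ℝ A \ {w} from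
      ⟨subset_convexHull ℝ A (htA hx), ne_of_mem_of_not_mem hx hwt⟩) hwt'

lemma exists_neg_of_notMem_convexHull {t : Finset E} {w : E} {a : E → ℝ}
    (ha : ∑ i ∈ t, a i = 1) (haw : ∑ i ∈ t, a i • i = w) (hw : w ∉ convexHull ℝ (t : Set E)) :
    ∃ j ∈ t, a j < 0 := by
  by_contra! h
  exact hw (Finset.mem_convexHull'.2 ⟨a, h, ha, haw⟩)

lemma Finset.finrank_add_one_le_card_of_affineSpan_eq_top {V : Finset E}
    (h : affineSpan ℝ (V : Set E) = ⊤) : finrank ℝ E + 1 ≤ V.card := by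
  have hrange : Set.range ((↑) : V → E) = ↑V := Subtype.range_coe
  have : Nonempty V :=
    Fintype.card_pos_iff.1 (AffineSubspace.card_pos_of_affineSpan_eq_top ℝ E E (hrange ▸ h))
  have := finrank_vectorSpan_range_add_one_le ℝ ((↑) : V → E)
  rwa [hrange, AffineSubspace.vectorSpan_eq_top_of_affineSpan_eq_top ℝ E E h, finrank_top,
    Fintype.card_coe] at this

lemma Finset.affineIndependent_of_affineSpan_eq_top_of_card_eq {V : Finset E}
    (h : affineSpan ℝ (V : Set E) = ⊤) (hcard : V.card = finrank ℝ E + 1) :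
    AffineIndependent ℝ ((↑) : V → E) := by
  have htop : vectorSpan ℝ (Set.range ((↑) : V → E)) = ⊤ := by
    rw [Subtype.range_coe]
    exact AffineSubspace.vectorSpan_eq_top_of_affineSpan_eq_top ℝ E E h
  rw [affineIndependent_iff_finrank_vectorSpan_eq ℝ _ (by rwa [Fintype.card_coe]), htop,
    finrank_top]

variable {P V : Set E} {t : Finset E} {c : E → ℝ} {l : ℝ}

lemma sum_smul_mem_smul_add_smul_of_le (hP : Convex ℝ P) (hVP : V ⊆ P) (htV : ↑t ⊆ V)
    (hc0 : ∀ i ∈ t, 0 ≤ c i) (hc1 : ∑ i ∈ t, c i = 1) {j : E} (hj : j ∈ t) (hl : l < 1)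
    (hlc : l ≤ c j) : ∑ i ∈ t, c i • i ∈ (1 - l) • P + l • V := by
  classical
  set d : E → ℝ := c - Pi.single j l
  have hd0 : ∀ i ∈ t, 0 ≤ d i := fun i hi => by
    rcases eq_or_ne i j with rfl | hij
    · simpa [d] using hlc
    · simpa [d, hij] using hc0 i hi
  have hd1 : ∑ i ∈ t, d i = 1 - l := by
    simp [d, Finset.sum_sub_distrib, hc1, hj]
  have hdx : ∑ i ∈ t, d i • i = ∑ i ∈ t, c i • i - l • j := by
    simp [d, sub_smul, Finset.sum_sub_distrib, Pi.single_apply, ite_smul, hj]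
  have hy : t.centerMass d id ∈ P :=
    hP.centerMass_mem hd0 (by linarith) fun i hi => hVP (htV hi)
  refine ⟨(1 - l) • t.centerMass d id, smul_mem_smul_set hy, l • j, smul_mem_smul_set (htV hj), ?_⟩
  rw [Finset.centerMass, smul_smul, hd1, mul_inv_cancel₀ (by linarith), one_smul]
  simp only [id, hdx, sub_add_cancel]

/-- `∑ c i • i = ∑ (c i - s * a i) • i + s • w` is a convex combination over `insert w t`. -/
lemma sum_smul_mem_smul_add_smul_of_exchange (hP : Convex ℝ P) (hVP : V ⊆ P) (htV : ↑t ⊆ V)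
    {w : E} (hwV : w ∈ V) (hwt : w ∉ t) {a : E → ℝ} {s : ℝ} (hc1 : ∑ i ∈ t, c i = 1)
    (ha1 : ∑ i ∈ t, a i = 1) (haw : ∑ i ∈ t, a i • i = w) (hs : 0 ≤ s)
    (hsc : ∀ i ∈ t, s * a i ≤ c i) {j : E} (hj : j ∈ t) (hl : l < 1)
    (hlc : l ≤ c j - s * a j) : ∑ i ∈ t, c i • i ∈ (1 - l) • P + l • V := by
  classical
  set d : E → ℝ := Function.update (c - s • a) w s
  have hdt : ∀ i ∈ t, d i = c i - s * a i := fun i hi => by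
    simp [d, Function.update_of_ne (ne_of_mem_of_not_mem hi hwt)]
  have hdw : d w = s := Function.update_self ..
  have hd1 : ∑ i ∈ insert w t, d i = 1 := by
    rw [Finset.sum_insert hwt, Finset.sum_congr rfl hdt, Finset.sum_sub_distrib, ← Finset.mul_sum,
      hc1, ha1, hdw]
    ring
  have hdx : ∑ i ∈ insert w t, d i • i = ∑ i ∈ t, c i • i := by
    rw [Finset.sum_insert hwt, Finset.sum_congr rfl fun i hi => by rw [hdt i hi], hdw]
    simp only [sub_smul, Finset.sum_sub_distrib, mul_smul, ← Finset.smul_sum, haw]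
    abel
  have hd0 : ∀ i ∈ insert w t, 0 ≤ d i := by
    simp only [Finset.mem_insert, forall_eq_or_imp, hdw, hs, true_and]
    exact fun i hi => by rw [hdt i hi]; linarith [hsc i hi]
  rw [← hdx]
  exact sum_smul_mem_smul_add_smul_of_le hP hVP
    (by rw [Finset.coe_insert]; exact Set.insert_subset hwV htV) hd0 hd1
    (Finset.mem_insert_of_mem hj) hl (by rw [hdt j hj]; exact hlc)

/-- `w = ∑ a i • i` is an affine relation over `t`, and subtracting `s` times it from a convex
combination whose weights are all at least `1 - n * l` (`n = finrank ℝ E`) keeps them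
nonnegative and lifts the weight of `j` to at least `l`. -/
def Finset.AdmitsExchange (t : Finset E) (w : E) (l : ℝ) : Prop :=
  ∃ a : E → ℝ, ∃ s : ℝ, ∃ j ∈ t, ∑ i ∈ t, a i = 1 ∧ ∑ i ∈ t, a i • i = w ∧ 0 ≤ s ∧
    (∀ i ∈ t, s * a i ≤ 1 - finrank ℝ E * l) ∧ l ≤ 1 - finrank ℝ E * l - s * a j

/-- At `l = 1/(n+1)` both inequalities of `AdmitsExchange` can be made strict. -/
lemma Finset.eventually_admitsExchange {t : Finset E} {w : E}
    (hspan : affineSpan ℝ (t : Set E) = ⊤) (hwt : w ∉ convexHull ℝ (t : Set E)) :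
    ∀ᶠ l in 𝓝 (1 / (finrank ℝ E + 1 : ℝ)), t.AdmitsExchange w l := by
  set n := finrank ℝ E
  obtain ⟨a, ha1, haw⟩ :=
    exists_sum_eq_one_of_mem_affineSpan (hspan ▸ AffineSubspace.mem_top ℝ E w)
  obtain ⟨j, hj, haj⟩ := exists_neg_of_notMem_convexHull ha1 haw hwt
  obtain ⟨s, hs, hsa⟩ := t.exists_pos_forall_mul_lt a (by positivity : (0 : ℝ) < 1 / (n + 1))
  have hlim₁ : Tendsto (fun l : ℝ => 1 - n * l) (𝓝 (1 / (n + 1))) (𝓝 (1 / (n + 1))) :=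
    (by fun_prop : Continuous fun l : ℝ => 1 - n * l).tendsto' _ _ (by field_simp; ring)
  have hlim₂ : Tendsto (fun l : ℝ => l + n * l) (𝓝 (1 / (n + 1))) (𝓝 1) :=
    (by fun_prop : Continuous fun l : ℝ => l + n * l).tendsto' _ _ (by field_simp; ring)
  have h₁ : ∀ᶠ l in 𝓝 (1 / (n + 1 : ℝ)), ∀ i ∈ t, s * a i ≤ 1 - n * l :=
    (eventually_all_finset t).2 fun i hi => hlim₁.eventually_const_le (hsa i hi)
  have h₂ : ∀ᶠ l in 𝓝 (1 / (n + 1 : ℝ)), l + n * l ≤ 1 - s * a j :=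
    hlim₂.eventually_le_const (by nlinarith)
  filter_upwards [h₁, h₂] with l h₁ h₂
  exact ⟨a, s, j, hj, ha1, haw, hs.le, h₁, by linarith⟩

end Exchange

section Covering

variable {E : Type*} [AddCommGroup E] [Module ℝ E] [FiniteDimensional ℝ E]

/-- A point whose Carathéodory weights are all below `l` uses a full simplex `t`, with every
weight at least `1 - n * l`; an exchange then moves weight onto a vertex outside `t`. -/
lemma convexHull_subset_smul_add_smul_of_admitsExchange {V : Finset E} {l : ℝ} (hl : l < 1)
    (hnl : finrank ℝ E * l ≤ 1) (hcard : finrank ℝ E + 1 < V.card)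
    (hexch : ∀ t ⊆ V, t.card = finrank ℝ E + 1 → AffineIndependent ℝ ((↑) : t → E) →
      ∀ w ∈ V, w ∉ t → t.AdmitsExchange w l) :
    convexHull ℝ ↑V ⊆ (1 - l) • convexHull ℝ ↑V + l • (V : Set E) := by
  intro x hx
  rw [convexHull_eq_union] at hx
  simp only [Set.mem_iUnion] at hx
  obtain ⟨t, htV, htind, hxt⟩ := hx
  obtain ⟨c, hc0, hc1, rfl⟩ := Finset.mem_convexHull'.1 hxt
  have hconv := convex_convexHull ℝ (V : Set E)
  have hVP := subset_convexHull ℝ (V : Set E)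
  by_cases hbig : ∃ j ∈ t, l ≤ c j
  · obtain ⟨j, hj, hlc⟩ := hbig
    exact sum_smul_mem_smul_add_smul_of_le hconv hVP htV hc0 hc1 hj hl hlc
  push Not at hbig
  have htcard : t.card = finrank ℝ E + 1 := by
    have := htind.card_le_finrank_succ.trans (Nat.succ_le_succ (Submodule.finrank_le _))
    rw [Fintype.card_coe] at this
    exact Finset.card_eq_of_sum_eq_one_of_forall_lt hc1 hbig this hnl
  have hclow : ∀ i ∈ t, 1 - finrank ℝ E * l ≤ c i := fun i hi => by
    simpa [htcard] using
      Finset.sub_le_of_sum_eq_one_of_forall_le hc1 (fun k hk => (hbig k hk).le) hi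
  obtain ⟨w, hwV, hwt⟩ := Finset.exists_mem_notMem_of_card_lt_card (htcard ▸ hcard)
  obtain ⟨a, s, j, hj, ha1, haw, hs, hsa, hlj⟩ :=
    hexch t (by exact_mod_cast htV) htcard htind w hwV hwt
  exact sum_smul_mem_smul_add_smul_of_exchange hconv hVP htV hwV hwt hc1
    ha1 haw hs (fun i hi => (hsa i hi).trans (hclow i hi)) hj hl (by linarith [hclow j hj])

theorem eventually_convexHull_subset_smul_add_smul {V : Finset E}
    (hV : (V : Set E) ⊆ (convexHull ℝ ↑V).extremePoints ℝ) (hcard : finrank ℝ E + 1 < V.card) :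
    ∀ᶠ l in 𝓝 (1 / (finrank ℝ E + 1 : ℝ)),
      l < 1 ∧ convexHull ℝ ↑V ⊆ (1 - l) • convexHull ℝ ↑V + l • (V : Set E) := by
  set n := finrank ℝ E
  have hn : 0 < n := by
    obtain ⟨u, -, v, -, huv⟩ := Finset.one_lt_card.1 (by omega : 1 < V.card)
    have : Nontrivial E := ⟨u, v, huv⟩
    exact Module.finrank_pos
  have hexch : ∀ᶠ l in 𝓝 (1 / (n + 1 : ℝ)), ∀ t ∈ V.powerset, t.card = n + 1 →
      AffineIndependent ℝ ((↑) : t → E) → ∀ w ∈ V, w ∉ t → t.AdmitsExchange w l := by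
    refine (eventually_all_finset _).2 fun t ht => ?_
    simp only [eventually_imp_distrib_left, eventually_all_finset]
    intro htcard htind w hwV hwt
    refine Finset.eventually_admitsExchange ?_
      (notMem_convexHull_of_mem_extremePoints (hV hwV) (by simpa using ht) hwt)
    simpa using htind.affineSpan_eq_top_iff_card_eq_finrank_add_one.2 (by simpa using htcard)
  have hsmall : ∀ᶠ l in 𝓝 (1 / (n + 1 : ℝ)), l < 1 / (n : ℝ) :=
    eventually_lt_nhds (one_div_lt_one_div_of_lt (by exact_mod_cast hn) (lt_add_one (n : ℝ)))
  filter_upwards [hexch, hsmall] with l hexch hsmall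
  have hnl : n * l < 1 := by rwa [lt_div_iff₀' (by positivity)] at hsmall
  have hl : l < 1 := hsmall.trans_le (div_le_one_of_le₀ (by exact_mod_cast hn) (by positivity))
  exact ⟨hl, convexHull_subset_smul_add_smul_of_admitsExchange hl hnl.le hcard
    fun t ht => hexch t (Finset.mem_powerset.2 ht)⟩

end Covering

section Polytope

variable {n : ℕ} {P : Set (EuclideanSpace ℝ (Fin n))}

lemma IsPolytope.finite_extremePoints (hP : IsPolytope P) : (P.extremePoints ℝ).Finite := by
  obtain ⟨S, rfl⟩ := hP
  exact S.finite_toSet.subset extremePoints_convexHull_subset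

lemma IsPolytope.convexHull_extremePoints (hP : IsPolytope P) :
    convexHull ℝ (P.extremePoints ℝ) = P := by
  obtain ⟨S, rfl⟩ := hP
  have hKM := closure_convexHull_extremePoints (S.finite_toSet.isCompact_convexHull ℝ)
    (convex_convexHull ℝ _)
  rw [(IsPolytope.finite_extremePoints ⟨S, rfl⟩).isClosed_convexHull ℝ |>.closure_eq] at hKM
  exact hKM

lemma le_lambdaParam (hP : Convex ℝ P) {l : ℝ} (hl₀ : 0 ≤ l) (hl₁ : l ≤ 1)
    (hsub : P ⊆ (1 - l) • P + l • P.extremePoints ℝ) : l ≤ lambdaParam P := by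
  refine le_csSup ⟨1, fun _ hx => hx.1.2⟩ ⟨⟨hl₀, hl₁⟩, hsub.antisymm ?_⟩
  rintro _ ⟨_, ⟨p, hp, rfl⟩, _, ⟨v, hv, rfl⟩, rfl⟩
  exact hP hp (extremePoints_subset hv) (by linarith) hl₀ (by ring)

end Polytope

theorem stmt_19 {n : ℕ} (P : Set (EuclideanSpace ℝ (Fin n))) (hP : IsPolytope P)
    (hint : (interior P).Nonempty) (h : lambdaParam P = 1 / ((n : ℝ) + 1)) :
    ∃ s : Finset (EuclideanSpace ℝ (Fin n)), s.card = n + 1 ∧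
      AffineIndependent ℝ (Subtype.val : {x // x ∈ s} → EuclideanSpace ℝ (Fin n)) ∧
      P = convexHull ℝ (s : Set (EuclideanSpace ℝ (Fin n))) := by
  set V := hP.finite_extremePoints.toFinset
  have hV : ↑V = P.extremePoints ℝ := hP.finite_extremePoints.coe_toFinset
  have hPV : convexHull ℝ ↑V = P := by rw [hV, hP.convexHull_extremePoints]
  have hPconv : Convex ℝ P := hPV ▸ convex_convexHull ℝ _
  have hspan : affineSpan ℝ (V : Set (EuclideanSpace ℝ (Fin n))) = ⊤ := by
    rw [← affineSpan_convexHull, hPV, ← hPconv.interior_nonempty_iff_affineSpan_eq_top]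
    exact hint
  have hcard := V.finrank_add_one_le_card_of_affineSpan_eq_top hspan
  rw [finrank_euclideanSpace_fin] at hcard
  rcases hcard.eq_or_lt with hsimplex | hmore
  · refine ⟨V, hsimplex.symm, ?_, hPV.symm⟩
    exact V.affineIndependent_of_affineSpan_eq_top_of_card_eq hspan
      (by rw [finrank_euclideanSpace_fin, hsimplex])
  · have hext : (V : Set (EuclideanSpace ℝ (Fin n))) ⊆ (convexHull ℝ ↑V).extremePoints ℝ := by
      rw [hPV, hV]
    have hcover := eventually_convexHull_subset_smul_add_smul hext
      (by rwa [finrank_euclideanSpace_fin])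
    rw [finrank_euclideanSpace_fin] at hcover
    obtain ⟨l, ⟨hl₁, hsub⟩, hl₀ : 1 / (n + 1 : ℝ) < l⟩ :=
      ((hcover.filter_mono (nhdsWithin_le_nhds (s := Ioi (1 / (n + 1 : ℝ))))).and
        self_mem_nhdsWithin).exists
    rw [hPV, hV] at hsub
    have := le_lambdaParam hPconv ((by positivity : (0 : ℝ) ≤ 1 / (n + 1)).trans hl₀.le)
      hl₁.le hsub
    linarith
end
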